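/- arXiv:2403.11888 — 7 statements merged into one kernel-verified Lean document; each statement's English description precedes it below -/
import Mathlib

section
/- Let G be a graph admitting an orientation with no directed odd cycle and maximum out-degree at most D. Then the Alon–Tarsi number of G is at most D + 1. -/
/-- An orientation of a simple graph: each edge gets exactly one direction. -/
structure GraphOrientation {V : Type*} (G : SimpleGraph V) where
  dir : V → V → Prop
  consistent : ∀ u v, G.Adj u v ↔ (dir u v ∨ dir v u)
  antisymm : ∀ u v, dir u v → ¬ dir v u

/-- The out-degree of a vertex in an orientation. -/
noncomputable def outDeg {V : Type*} {G : SimpleGraph V} (o : GraphOrientation G) (v : V) : ℕ :=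
  Nat.card {u : V // o.dir v u}

/-- The in-degree of a vertex in an orientation. -/
noncomputable def inDeg {V : Type*} {G : SimpleGraph V} (o : GraphOrientation G) (v : V) : ℕ :=
  Nat.card {u : V // o.dir u v}

/-- A spanning Eulerian subdigraph of an orientation, given by its set of directed edges:
every edge is an edge of the orientation, and every vertex has equal out- and in-degree. -/
def IsEulerian {V : Type*} {G : SimpleGraph V} (o : GraphOrientation G) (A : Finset (V × V)) : Prop :=
  (∀ p ∈ A, o.dir p.1 p.2) ∧
  ∀ v : V, Nat.card {p : V × V // p ∈ A ∧ p.1 = v} = Nat.card {p : V × V // p ∈ A ∧ p.2 = v}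

/-- The number of even Eulerian spanning subdigraphs. -/
noncomputable def EE {V : Type*} {G : SimpleGraph V} (o : GraphOrientation G) : ℕ :=
  Nat.card {A : Finset (V × V) // IsEulerian o A ∧ Even A.card}

/-- The number of odd Eulerian spanning subdigraphs. -/
noncomputable def EO {V : Type*} {G : SimpleGraph V} (o : GraphOrientation G) : ℕ :=
  Nat.card {A : Finset (V × V) // IsEulerian o A ∧ Odd A.card}

/-- An Alon–Tarsi orientation: the numbers of even and odd Eulerian subdigraphs differ. -/
def AlonTarsiOrientation {V : Type*} {G : SimpleGraph V} (o : GraphOrientation G) : Prop :=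
  EE o ≠ EO o

/-- A list `v :: l` is a directed cycle for the relation `dir` if its vertices are distinct
and `dir` holds along consecutive vertices, wrapping back to `v`. -/
def IsDirCycle {V : Type*} (dir : V → V → Prop) : List V → Prop
  | [] => False
  | v :: l => (v :: l).Nodup ∧ List.Chain dir v (l ++ [v])

/-- The relation `dir` admits some directed cycle. -/
def HasDirCycle {V : Type*} (dir : V → V → Prop) : Prop :=
  ∃ l : List V, IsDirCycle dir l

/-- The relation `dir` admits a directed cycle of odd length. -/
def HasOddDirCycle {V : Type*} (dir : V → V → Prop) : Prop :=
  ∃ l : List V, IsDirCycle dir l ∧ Odd l.length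

/-- The Alon–Tarsi number of `G`: the least `k` such that `G` has an Alon–Tarsi
orientation with all out-degrees `< k`. -/
noncomputable def ATNumber {V : Type*} (G : SimpleGraph V) : ℕ :=
  sInf {k : ℕ | ∃ o : GraphOrientation G, (∀ v, outDeg o v < k) ∧ AlonTarsiOrientation o}


/-!
Every Eulerian subdigraph `A` of the orientation is a union of arc-disjoint directed cycles, all of
even length, so `A` has an even number of arcs: `EO = 0`, while the empty subdigraph gives
`EE ≥ 1`. A cycle is found inside a nonempty balanced arc set by following, from any arc, a chosen
out-arc at each vertex; the walk becomes periodic, and the arcs `v ↦ (v, f v)` along the periodic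
orbit form a directed cycle whose removal keeps the arc set balanced.
-/

open Function Finset

theorem isDirCycle_iff_nodup_and_chain {α : Type*} {r : α → α → Prop} {l : List α}
    (hl : l ≠ []) :
    IsDirCycle r l ↔ (l : Cycle α).Nodup ∧ (l : Cycle α).Chain r := by
  obtain ⟨a, l, rfl⟩ := List.exists_cons_of_ne_nil hl
  rw [Cycle.nodup_coe_iff, Cycle.chain_coe_cons]
  rfl

namespace Function

variable {α : Type*} {f : α → α} {x : α}

theorem isDirCycle_periodicOrbit {r : α → α → Prop} (hx : x ∈ periodicPts f)
    (hr : ∀ n, r (f^[n] x) (f^[n + 1] x)) :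
    IsDirCycle r ((List.range (minimalPeriod f x)).map (f^[·] x)) := by
  have hne : (List.range (minimalPeriod f x)).map (f^[·] x) ≠ [] := by
    simpa using (minimalPeriod_pos_of_mem_periodicPts hx).ne'
  rw [isDirCycle_iff_nodup_and_chain hne]
  exact ⟨nodup_periodicOrbit, (periodicOrbit_chain' r hx).2 hr⟩

theorem even_minimalPeriod_of_not_hasOddDirCycle {r : α → α → Prop} (hr : ¬ HasOddDirCycle r)
    (hx : x ∈ periodicPts f) (hrx : ∀ n, r (f^[n] x) (f^[n + 1] x)) :
    Even (minimalPeriod f x) := by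
  by_contra hodd
  exact hr ⟨_, isDirCycle_periodicOrbit hx hrx, by simpa using Nat.not_even_iff_odd.1 hodd⟩

/-- Empty when `x` is not periodic, since then `minimalPeriod f x = 0`. -/
noncomputable def orbitFinset [DecidableEq α] (f : α → α) (x : α) : Finset α :=
  (range (minimalPeriod f x)).image (f^[·] x)

variable [DecidableEq α]

theorem card_orbitFinset : #(orbitFinset f x) = minimalPeriod f x :=
  (card_image_of_injOn (by simpa using iterate_injOn_Iio_minimalPeriod)).trans (card_range _)

theorem mem_orbitFinset (hx : x ∈ periodicPts f) {y : α} :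
    y ∈ orbitFinset f x ↔ ∃ n, f^[n] x = y := by
  simp only [orbitFinset, mem_image, mem_range]
  refine ⟨fun ⟨n, _, hn⟩ => ⟨n, hn⟩, fun ⟨n, hn⟩ => ?_⟩
  exact ⟨n % minimalPeriod f x, Nat.mod_lt _ (minimalPeriod_pos_of_mem_periodicPts hx),
    iterate_mod_minimalPeriod_eq.trans hn⟩

theorem bijOn_orbitFinset (hx : x ∈ periodicPts f) :
    Set.BijOn f (orbitFinset f x) (orbitFinset f x) := by
  have hpos := minimalPeriod_pos_of_mem_periodicPts hx
  refine ⟨fun y hy => ?_, (bijOn_periodicPts f).injOn.mono fun y hy => ?_, fun y hy => ?_⟩ <;>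
    obtain ⟨n, rfl⟩ := (mem_orbitFinset hx).1 hy
  · exact (mem_orbitFinset hx).2 ⟨n + 1, iterate_succ_apply' f n x⟩
  · exact mk_mem_periodicPts hpos ((isPeriodicPt_minimalPeriod f x).apply_iterate n)
  · refine ⟨f^[n + minimalPeriod f x - 1] x, (mem_orbitFinset hx).2 ⟨_, rfl⟩, ?_⟩
    rw [← iterate_succ_apply' f, Nat.succ_eq_add_one, Nat.sub_add_cancel (by omega),
      iterate_add_apply, iterate_minimalPeriod]

end Function

theorem exists_periodicPt_forall_iterate {α : Type*} [Finite α] {r : α → α → Prop}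
    (hsucc : ∀ a b, r a b → ∃ c, r b c) {a b : α} (hab : r a b) :
    ∃ (f : α → α) (x : α), x ∈ periodicPts f ∧ ∀ n, r (f^[n] x) (f^[n + 1] x) := by
  classical
  let f : α → α := fun v => if h : ∃ c, r v c then h.choose else v
  have hf : ∀ v, (∃ c, r v c) → r v (f v) := fun v h => by
    simp only [f, dif_pos h]
    exact h.choose_spec
  have horbit : ∀ n, r (f^[n] a) (f^[n + 1] a) := by
    intro n
    induction n with
    | zero => exact hf a ⟨b, hab⟩
    | succ n ih =>
      rw [iterate_succ_apply' f (n + 1)]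
      exact hf _ (hsucc _ _ ih)
  obtain ⟨i, j, hij, hfij⟩ := Finite.exists_ne_map_eq_of_infinite (f^[·] a)
  wlog hlt : i < j generalizing i j
  · exact this j i hij.symm hfij.symm (by omega)
  refine ⟨f, f^[i] a, mk_mem_periodicPts (n := j - i) (by omega) ?_, fun n => ?_⟩
  · simp only [IsPeriodicPt, IsFixedPt, ← iterate_add_apply, Nat.sub_add_cancel hlt.le]
    exact hfij.symm
  · simpa only [← iterate_add_apply, Nat.add_right_comm n 1 i] using horbit (n + i)

section Balanced

variable {α : Type*} [DecidableEq α]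

def IsBalanced (A : Finset (α × α)) : Prop :=
  ∀ v, #{p ∈ A | p.1 = v} = #{p ∈ A | p.2 = v}

theorem IsBalanced.sdiff {A C : Finset (α × α)} (hA : IsBalanced A) (hC : IsBalanced C)
    (hCA : C ⊆ A) : IsBalanced (A \ C) := by
  have hfilter : ∀ (P : α × α → Prop) [DecidablePred P],
      #{p ∈ A \ C | P p} = #{p ∈ A | P p} - #{p ∈ C | P p} := fun P _ => by
    rw [← card_sdiff_of_subset (filter_subset_filter P hCA)]
    congr 1
    grind
  intro v
  rw [hfilter, hfilter, hA v, hC v]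

theorem IsBalanced.exists_mem_of_mem {A : Finset (α × α)} (hA : IsBalanced A) {a b : α}
    (hab : (a, b) ∈ A) : ∃ c, (b, c) ∈ A := by
  have hin : #{p ∈ A | p.2 = b} ≠ 0 := card_ne_zero.2 ⟨(a, b), mem_filter.2 ⟨hab, rfl⟩⟩
  rw [← hA b] at hin
  obtain ⟨⟨b', c⟩, hbc⟩ := card_ne_zero.1 hin
  obtain ⟨hmem, rfl : b' = b⟩ := mem_filter.1 hbc
  exact ⟨c, hmem⟩

theorem isBalanced_image_graph {s : Finset α} {g : α → α} (hg : Set.BijOn g s s) :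
    IsBalanced (s.image fun v => (v, g v)) := by
  have hinj : Injective fun v => (v, g v) := fun _ _ h => congrArg Prod.fst h
  intro v
  simp only [filter_image, card_image_of_injective _ hinj]
  symm
  refine card_nbij g (fun u hu => ?_) (hg.injOn.mono fun u hu => (mem_filter.1 hu).1)
    (fun w hw => ?_)
  · simp only [coe_filter, Set.mem_ofPred_eq] at hu ⊢
    exact ⟨hg.mapsTo hu.1, hu.2⟩
  · simp only [coe_filter, Set.mem_ofPred_eq] at hw
    obtain ⟨u, hu, rfl⟩ := hg.surjOn hw.1
    exact ⟨u, by simpa using ⟨hu, hw.2⟩, rfl⟩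

theorem IsBalanced.even_card [Finite α] {r : α → α → Prop} (hr : ¬ HasOddDirCycle r)
    {A : Finset (α × α)} (hrA : ∀ p ∈ A, r p.1 p.2) (hA : IsBalanced A) : Even #A := by
  induction A using Finset.strongInduction with
  | H A ih =>
  obtain rfl | ⟨⟨a, b⟩, hab⟩ := A.eq_empty_or_nonempty
  · simp
  obtain ⟨f, x, hx, hfx⟩ := exists_periodicPt_forall_iterate (r := fun u v => (u, v) ∈ A)
    (fun _ _ => hA.exists_mem_of_mem) hab
  set C := (orbitFinset f x).image fun v => (v, f v)
  have hCA : C ⊆ A := by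
    simp only [C, image_subset_iff, mem_orbitFinset hx]
    rintro _ ⟨n, rfl⟩
    simpa only [iterate_succ_apply'] using hfx n
  have hC_card : #C = minimalPeriod f x :=
    (card_image_of_injective _ fun _ _ h => congrArg Prod.fst h).trans card_orbitFinset
  have hC_even : Even #C :=
    hC_card ▸ even_minimalPeriod_of_not_hasOddDirCycle hr hx fun n => hrA _ (hfx n)
  have hC_nonempty : C.Nonempty :=
    card_pos.1 (hC_card ▸ minimalPeriod_pos_of_mem_periodicPts hx)
  rw [← card_sdiff_add_card_eq_card hCA]
  refine Even.add (ih _ (sdiff_ssubset hCA hC_nonempty) (fun p hp => hrA p (mem_sdiff.1 hp).1) ?_)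
    hC_even
  exact hA.sdiff (isBalanced_image_graph (bijOn_orbitFinset hx)) hCA

end Balanced

section Eulerian

variable {V : Type*} {G : SimpleGraph V} {o : GraphOrientation G}

theorem natCard_subtype_mem_and (A : Finset V) (P : V → Prop) [DecidablePred P] :
    Nat.card {p // p ∈ A ∧ P p} = #{p ∈ A | P p} := by
  simp_rw [← mem_filter, Nat.card_eq_finsetCard]

theorem isEulerian_iff [DecidableEq V] {A : Finset (V × V)} :
    IsEulerian o A ↔ (∀ p ∈ A, o.dir p.1 p.2) ∧ IsBalanced A := by
  simp only [IsEulerian, IsBalanced, natCard_subtype_mem_and]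

theorem isEulerian_empty : IsEulerian o ∅ := by
  classical
  simp [isEulerian_iff, IsBalanced]

theorem IsEulerian.even_card [Finite V] (hodd : ¬ HasOddDirCycle o.dir) {A : Finset (V × V)}
    (hA : IsEulerian o A) : Even #A := by
  classical
  obtain ⟨hdir, hbal⟩ := isEulerian_iff.1 hA
  exact hbal.even_card hodd hdir

theorem alonTarsiOrientation_of_not_hasOddDirCycle [Finite V] (hodd : ¬ HasOddDirCycle o.dir) :
    AlonTarsiOrientation o := by
  have hEO : EO o = 0 :=
    Nat.card_eq_zero.2 (.inl ⟨fun A => Nat.not_odd_iff_even.2 (A.2.1.even_card hodd) A.2.2⟩)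
  have hEE : EE o ≠ 0 :=
    Nat.card_ne_zero.2 ⟨⟨⟨∅, isEulerian_empty, Even.zero⟩⟩, inferInstance⟩
  rw [AlonTarsiOrientation, hEO]
  exact hEE

end Eulerian

/-- If `G` admits an orientation with no directed odd cycle and maximum
out-degree at most `D`, then `AT(G) ≤ D + 1`. -/
theorem statement3 {V : Type*} [Fintype V] (G : SimpleGraph V) (D : ℕ)
    (h : ∃ o : GraphOrientation G, ¬ HasOddDirCycle o.dir ∧ ∀ v, outDeg o v ≤ D) :
    ATNumber G ≤ D + 1 := by
  obtain ⟨o, hodd, hdeg⟩ := h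
  exact Nat.sInf_le ⟨o, fun v => Nat.lt_succ_of_le (hdeg v),
    alonTarsiOrientation_of_not_hasOddDirCycle hodd⟩
end

section
/- For every integer r ≥ 2 and integer d ≥ 0, every graph G with maximum degree at most d and chromatic number at most r has an orientation with no directed odd cycle in which every vertex has out-degree at most (1 − 1/(4r+1))·d + 1; consequently AT(G) ≤ (1 − 1/(4r+1))·d + 2. -/
/-!
Peel the graph one piece at a time. Let `m = ⌊d / (4r + 1)⌋`. If some remaining vertex has at most
`d - m` remaining neighbours, it is the next piece. Otherwise every remaining vertex has more than
`4rm` remaining neighbours, and the lemma of Esperet, Kang and Thomassé gives an induced bipartite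
subgraph of minimum degree `2m`; by Hall's theorem it has an orientation in which every in-degree
is at least `m`. Orient the piece this way and all its edges to the rest of the graph away from
it: its vertices then have out-degree at most `d - m`.

Record the step `g` at which a vertex is peeled and its side `σ` in the bipartition of its piece.
Every arc increases `g`, or keeps `g` and flips `σ`. A directed cycle, and likewise an Eulerian
subdigraph (the sums of `g` over tails and over heads agree), therefore stays in one layer and
flips `σ` at every arc, so it has even length. Hence the orientation has no odd Eulerian
subdigraph, while the empty one is even.
-/

section

open Finset
open scoped Classical

variable {V : Type*}

lemma ZMod.eq_add_one_of_ne {a b : ZMod 2} (h : a ≠ b) : b = a + 1 := by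
  revert a b; decide

def IsLayeredBipartite (dir : V → V → Prop) (g : V → ℕ) (σ : V → ZMod 2) : Prop :=
  ∀ ⦃u v⦄, dir u v → g u < g v ∨ g u = g v ∧ σ u ≠ σ v

namespace IsLayeredBipartite

variable {dir : V → V → Prop} {g : V → ℕ} {σ : V → ZMod 2}

lemma isChain (h : IsLayeredBipartite dir g σ) :
    ∀ {l : List V} {a b : V}, (a :: (l ++ [b])).IsChain dir →
      g a < g b ∨ g a = g b ∧ σ b = σ a + (l.length + 1 : ℕ)
  | [], a, b, hc => by
    rcases h (List.isChain_pair.mp hc) with hlt | ⟨heq, hσ⟩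
    · exact .inl hlt
    · exact .inr ⟨heq, by simpa using ZMod.eq_add_one_of_ne hσ⟩
  | c :: l, a, b, hc => by
    obtain ⟨hac, hcb⟩ := List.isChain_cons_cons.mp hc
    rcases h hac, h.isChain hcb with ⟨hlt | ⟨heq, hσ⟩, hlt' | ⟨heq', hσ'⟩⟩
    · exact .inl (hlt.trans hlt')
    · exact .inl (heq' ▸ hlt)
    · exact .inl (heq ▸ hlt')
    · refine .inr ⟨heq.trans heq', ?_⟩
      rw [hσ', ZMod.eq_add_one_of_ne hσ, List.length_cons]
      push_cast
      ring

lemma not_hasOddDirCycle (h : IsLayeredBipartite dir g σ) : ¬ HasOddDirCycle dir := by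
  rintro ⟨_ | ⟨v, l⟩, hcyc, hodd⟩
  · exact hcyc
  rcases h.isChain hcyc.2 with hlt | ⟨-, hσ⟩
  · exact lt_irrefl _ hlt
  · have : ((l.length + 1 : ℕ) : ZMod 2) = 0 := by simpa using hσ
    rw [ZMod.natCast_eq_zero_iff_even] at this
    exact Nat.not_odd_iff_even.mpr this hodd

end IsLayeredBipartite

section

variable {G : SimpleGraph V} {o : GraphOrientation G}

lemma IsEulerian.card_filter_fst_eq {A : Finset (V × V)} (hA : IsEulerian o A) (v : V) :
    #{p ∈ A | p.1 = v} = #{p ∈ A | p.2 = v} := by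
  simpa only [← Nat.card_eq_finsetCard, Finset.mem_filter] using hA.2 v

lemma IsEulerian.sum_fst_eq_sum_snd [Fintype V] {M : Type*} [AddCommMonoid M] {A : Finset (V × V)}
    (hA : IsEulerian o A) (f : V → M) : ∑ p ∈ A, f p.1 = ∑ p ∈ A, f p.2 := by
  simp only [← sum_fiberwise' A Prod.fst f, ← sum_fiberwise' A Prod.snd f, sum_const,
    hA.card_filter_fst_eq]

lemma IsLayeredBipartite.even_card_of_isEulerian [Fintype V] {g : V → ℕ} {σ : V → ZMod 2}
    (h : IsLayeredBipartite o.dir g σ) {A : Finset (V × V)} (hA : IsEulerian o A) :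
    Even #A := by
  have hg : ∀ p ∈ A, g p.1 ≤ g p.2 := fun p hp => by
    rcases h (hA.1 p hp) with hlt | ⟨heq, -⟩ <;> omega
  have hflat := (sum_eq_sum_iff_of_le hg).mp (hA.sum_fst_eq_sum_snd g)
  have hflip : ∀ p ∈ A, σ p.2 = σ p.1 + 1 := fun p hp => by
    rcases h (hA.1 p hp) with hlt | ⟨-, hσ⟩
    · exact absurd (hflat p hp) hlt.ne
    · exact ZMod.eq_add_one_of_ne hσ
  have hsum := hA.sum_fst_eq_sum_snd σ
  rw [sum_congr rfl hflip, sum_add_distrib, sum_const, nsmul_one, left_eq_add,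
    ZMod.natCast_eq_zero_iff_even] at hsum
  exact hsum

lemma IsLayeredBipartite.alonTarsiOrientation [Fintype V] {g : V → ℕ} {σ : V → ZMod 2}
    (h : IsLayeredBipartite o.dir g σ) : AlonTarsiOrientation o := by
  have hEO : EO o = 0 := by
    have : IsEmpty {A // IsEulerian o A ∧ Odd #A} :=
      ⟨fun ⟨A, hA, hodd⟩ => Nat.not_odd_iff_even.mpr (h.even_card_of_isEulerian hA) hodd⟩
    exact Nat.card_of_isEmpty
  have hEE : EE o ≠ 0 := by
    have : Nonempty {A // IsEulerian o A ∧ Even #A} :=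
      ⟨⟨∅, ⟨by simp, fun v => by simp⟩, by simp⟩⟩
    exact Nat.card_pos.ne'
  rw [AlonTarsiOrientation, hEO]
  exact hEE

lemma ATNumber_le_of_alonTarsiOrientation {G : SimpleGraph V} {o : GraphOrientation G}
    (ho : AlonTarsiOrientation o) {k : ℕ} (hk : ∀ v, outDeg o v ≤ k) : ATNumber G ≤ k + 1 :=
  Nat.sInf_le ⟨o, fun v => Nat.lt_succ_of_le (hk v), ho⟩

end

structure IsOrientationOn (G : SimpleGraph V) (S : Finset V) (e : V → V → Prop) : Prop where
  mem_adj : ∀ ⦃u v⦄, e u v → u ∈ S ∧ v ∈ S ∧ G.Adj u v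
  iff_not : ∀ ⦃u v⦄, u ∈ S → v ∈ S → G.Adj u v → (e u v ↔ ¬ e v u)

namespace IsOrientationOn

variable {G : SimpleGraph V} {S : Finset V} {e : V → V → Prop}

lemma rel_or_rel (h : IsOrientationOn G S e) {u v : V} (hu : u ∈ S) (hv : v ∈ S)
    (huv : G.Adj u v) : e u v ∨ e v u :=
  or_iff_not_imp_left.mpr fun hn => not_not.mp ((h.iff_not hu hv huv).not.mp hn)

lemma card_filter_adj (h : IsOrientationOn G S e) {v : V} (hv : v ∈ S) :
    #{u ∈ S | G.Adj v u} = #{u ∈ S | e v u} + #{u ∈ S | e u v} := by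
  rw [← card_union_of_disjoint (disjoint_filter.mpr fun u hu hvu => (h.iff_not hv hu
    (h.mem_adj hvu).2.2).mp hvu)]
  congr 1
  ext u
  simp only [mem_filter, mem_union, ← and_or_left]
  refine and_congr_right fun hu => ⟨h.rel_or_rel hv hu, ?_⟩
  rintro (hvu | huv)
  · exact (h.mem_adj hvu).2.2
  · exact (h.mem_adj huv).2.2.symm

def toGraphOrientation [Fintype V] (h : IsOrientationOn G univ e) : GraphOrientation G where
  dir := e
  consistent u v := by
    refine ⟨h.rel_or_rel (mem_univ u) (mem_univ v), ?_⟩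
    rintro (huv | hvu)
    · exact (h.mem_adj huv).2.2
    · exact (h.mem_adj hvu).2.2.symm
  antisymm u v huv := (h.iff_not (mem_univ u) (mem_univ v) (h.mem_adj huv).2.2).mp huv

lemma outDeg_toGraphOrientation [Fintype V] (h : IsOrientationOn G univ e) (v : V) :
    outDeg h.toGraphOrientation v = #{u ∈ univ | e v u} := by
  rw [outDeg, Nat.card_eq_fintype_card, Fintype.card_subtype]
  rfl

end IsOrientationOn

def SimpleGraph.appendOrientation (G : SimpleGraph V) (S T : Finset V) (e f : V → V → Prop)
    (u v : V) : Prop :=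
  u ∈ S ∧ v ∈ T ∧ G.Adj u v ∨ e u v ∨ f u v

section

variable {G : SimpleGraph V} {S T : Finset V} {e f : V → V → Prop}

lemma IsOrientationOn.appendOrientation (he : IsOrientationOn G S e) (hf : IsOrientationOn G T f)
    (hST : Disjoint S T) : IsOrientationOn G (S ∪ T) (G.appendOrientation S T e f) := by
  have hS : ∀ ⦃u⦄, u ∈ S → u ∉ T := fun u hu => Finset.disjoint_left.mp hST hu
  refine ⟨fun u v huv => ?_, fun u v hu hv huv => ?_⟩
  · rcases huv with ⟨hu, hv, huv⟩ | huv | huv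
    · exact ⟨mem_union_left _ hu, mem_union_right _ hv, huv⟩
    · obtain ⟨hu, hv, huv⟩ := he.mem_adj huv
      exact ⟨mem_union_left _ hu, mem_union_left _ hv, huv⟩
    · obtain ⟨hu, hv, huv⟩ := hf.mem_adj huv
      exact ⟨mem_union_right _ hu, mem_union_right _ hv, huv⟩
  have heS : ∀ ⦃x y⦄, e x y → x ∈ S ∧ y ∈ S := fun x y h => ⟨(he.mem_adj h).1, (he.mem_adj h).2.1⟩
  have hfT : ∀ ⦃x y⦄, f x y → x ∈ T ∧ y ∈ T := fun x y h => ⟨(hf.mem_adj h).1, (hf.mem_adj h).2.1⟩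
  have hvu := huv.symm
  unfold SimpleGraph.appendOrientation
  rcases mem_union.mp hu with hu | hu <;> rcases mem_union.mp hv with hv | hv
  · have := he.iff_not hu hv huv
    grind
  · grind
  · grind
  · have := hf.iff_not hu hv huv
    grind

lemma IsLayeredBipartite.appendOrientation {g : V → ℕ} {σS σT : V → ZMod 2}
    (he : IsOrientationOn G S e) (heσ : ∀ ⦃u v⦄, e u v → σS u ≠ σS v)
    (hf : IsOrientationOn G T f) (hfg : IsLayeredBipartite f g σT) (hST : Disjoint S T) :
    IsLayeredBipartite (G.appendOrientation S T e f) (fun v => if v ∈ S then 0 else g v + 1)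
      (fun v => if v ∈ S then σS v else σT v) := by
  have hT : ∀ ⦃u⦄, u ∈ T → u ∉ S := fun u hu => Finset.disjoint_right.mp hST hu
  rintro u v (⟨hu, hv, -⟩ | huv | huv)
  · simp [hu, hT hv]
  · obtain ⟨hu, hv, -⟩ := he.mem_adj huv
    simp [hu, hv, heσ huv]
  · obtain ⟨hu, hv, -⟩ := hf.mem_adj huv
    simpa [hT hu, hT hv] using hfg huv

lemma IsOrientationOn.card_filter_appendOrientation_of_mem (he : IsOrientationOn G S e)
    (hf : IsOrientationOn G T f) (hST : Disjoint S T) {v : V} (hv : v ∈ S) :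
    #{u ∈ S ∪ T | G.appendOrientation S T e f v u} = #{u ∈ T | G.Adj v u} + #{u ∈ S | e v u} := by
  rw [← card_union_of_disjoint (disjoint_filter_filter hST.symm)]
  congr 1
  ext u
  have := Finset.disjoint_left.mp hST hv
  have := (he.mem_adj (u := v) (v := u)).mt
  have := (hf.mem_adj (u := v) (v := u)).mt
  simp only [mem_filter, mem_union]
  unfold SimpleGraph.appendOrientation
  tauto

lemma IsOrientationOn.card_filter_appendOrientation_of_notMem (he : IsOrientationOn G S e)
    (hf : IsOrientationOn G T f) {v : V} (hv : v ∉ S) :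
    #{u ∈ S ∪ T | G.appendOrientation S T e f v u} = #{u ∈ T | f v u} := by
  congr 1
  ext u
  have := (he.mem_adj (u := v) (v := u)).mt
  have := (hf.mem_adj (u := v) (v := u)).mt
  simp only [mem_filter, mem_union]
  unfold SimpleGraph.appendOrientation
  tauto

end

lemma Sym2.card_filter_mem_le_two (s : Finset V) (z : Sym2 V) : #{v ∈ s | v ∈ z} ≤ 2 := by
  induction z using Sym2.ind with
  | h a b => exact (card_le_card (t := {a, b}) fun v hv => by simp_all).trans card_le_two

lemma Finset.exists_subsets_le_card_bipartite_of_lt {α β : Type*} (r : α → β → Prop) (t : ℕ)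
    (X : Finset α) (Y : Finset β) (h : t * (#X + #Y) < ∑ x ∈ X, #(Y.bipartiteAbove r x)) :
    ∃ A ⊆ X, ∃ B ⊆ Y, A.Nonempty ∧ (∀ a ∈ A, t ≤ #(B.bipartiteAbove r a)) ∧
      ∀ b ∈ B, t ≤ #(A.bipartiteBelow r b) := by
  by_cases hX : ∃ a ∈ X, #(Y.bipartiteAbove r a) < t
  · obtain ⟨a, ha, hlt⟩ := hX
    have hcard : t * (#X + #Y) = t * (#(X.erase a) + #Y) + t := by
      rw [← card_erase_add_one ha]; ring
    rw [← sum_erase_add _ _ ha] at h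
    obtain ⟨A, hA, B, hB, hAB⟩ :=
      exists_subsets_le_card_bipartite_of_lt r t (X.erase a) Y (by linarith)
    exact ⟨A, hA.trans (erase_subset a X), B, hB, hAB⟩
  by_cases hY : ∃ b ∈ Y, #(X.bipartiteBelow r b) < t
  · obtain ⟨b, hb, hlt⟩ := hY
    have hcard : t * (#X + #Y) = t * (#X + #(Y.erase b)) + t := by
      rw [← card_erase_add_one hb]; ring
    rw [sum_card_bipartiteAbove_eq_sum_card_bipartiteBelow, ← sum_erase_add _ _ hb] at h
    obtain ⟨A, hA, B, hB, hAB⟩ := exists_subsets_le_card_bipartite_of_lt r t X (Y.erase b)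
      (by rw [sum_card_bipartiteAbove_eq_sum_card_bipartiteBelow]; linarith)
    exact ⟨A, hA, B, hB.trans (erase_subset b Y), hAB⟩
  push Not at hX hY
  refine ⟨X, subset_rfl, Y, subset_rfl, nonempty_iff_ne_empty.mpr ?_, hX, hY⟩
  rintro rfl
  simp at h
termination_by #X + #Y
decreasing_by
  all_goals simp only [card_erase_of_mem, *]
  all_goals have := card_pos.mpr ⟨_, ‹_ ∈ _›⟩
  all_goals omega

namespace SimpleGraph

variable (G : SimpleGraph V)

lemma exists_injective_incidentEdges (S : Finset V) (m : ℕ)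
    (hS : ∀ v ∈ S, 2 * m ≤ #{u ∈ S | G.Adj v u}) :
    ∃ f : S × Fin m → Sym2 V, Function.Injective f ∧
      ∀ x, f x ∈ S.sym2 ∧ f x ∈ G.edgeSet ∧ x.1.1 ∈ f x := by
  let incident (x : S × Fin m) : Finset (Sym2 V) := {z ∈ S.sym2 | z ∈ G.edgeSet ∧ x.1.1 ∈ z}
  suffices hall : ∀ s : Finset (S × Fin m), #s ≤ #(s.biUnion incident) by
    obtain ⟨f, hf, hmem⟩ := (all_card_le_biUnion_card_iff_exists_injective incident).mp hall
    exact ⟨f, hf, fun x => by simpa [incident, and_assoc] using hmem x⟩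
  intro s
  set T := s.image fun x => x.1.1
  set E := s.biUnion incident
  have hs : #s ≤ #T * m := by
    simpa using card_le_card_of_injOn (fun x => (x.1.1, x.2)) (t := T ×ˢ (univ : Finset (Fin m)))
      (fun x hx => by simpa [T] using ⟨_, hx⟩) fun x _ y _ hxy => by
        simp only [Prod.mk.injEq] at hxy; exact Prod.ext (Subtype.ext hxy.1) hxy.2
  -- double counting of incidences between `T` and `E`: each edge has at most two ends
  have hdeg : ∀ v ∈ T, 2 * m ≤ #(E.bipartiteAbove (· ∈ ·) v) := by
    intro v hv
    obtain ⟨x, hx, rfl⟩ := mem_image.mp hv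
    refine (hS _ x.1.2).trans (card_le_card_of_injOn (fun u => s(x.1.1, u)) ?_ ?_)
    · intro u hu
      simp only [coe_filter, Set.mem_ofPred_eq] at hu
      simp only [bipartiteAbove, coe_filter, Set.mem_ofPred_eq, E, mem_biUnion]
      exact ⟨⟨x, hx, by simp [incident, hu.1, hu.2, x.1.2]⟩, Sym2.mem_mk_left _ _⟩
    · exact fun u _ u' _ h => Sym2.congr_right.mp h
  have := card_nsmul_le_card_nsmul (· ∈ ·) hdeg fun z _ => Sym2.card_filter_mem_le_two T z
  simp only [smul_eq_mul] at this
  nlinarith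

lemma exists_isOrientationOn_le_card_inNeighbors (S : Finset V) (m : ℕ)
    (hS : ∀ v ∈ S, 2 * m ≤ #{u ∈ S | G.Adj v u}) :
    ∃ e, IsOrientationOn G S e ∧ ∀ v ∈ S, m ≤ #{u ∈ S | e u v} := by
  obtain ⟨f, hf, hfS⟩ := G.exists_injective_incidentEdges S m hS
  let claims (v : V) (z : Sym2 V) : Prop := ∃ x, f x = z ∧ x.1.1 = v
  have hclaims : ∀ {u v z}, claims u z → claims v z → u = v := by
    rintro _ _ _ ⟨x, rfl, rfl⟩ ⟨y, hy, rfl⟩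
    rw [hf hy]
  -- a claimed edge points to its claimer; the other edges follow an arbitrary strict total order
  refine ⟨fun u v => u ∈ S ∧ v ∈ S ∧ G.Adj u v ∧
      (claims v s(u, v) ∨ ¬ claims u s(u, v) ∧ WellOrderingRel u v),
    ⟨fun u v h => ⟨h.1, h.2.1, h.2.2.1⟩, fun u v hu hv huv => ?_⟩, fun v hv => ?_⟩
  · have hc : ¬ (claims u s(u, v) ∧ claims v s(u, v)) := fun h => G.ne_of_adj huv (hclaims h.1 h.2)
    have hwo := trichotomous_of WellOrderingRel u v
    have hwo' : ¬ (WellOrderingRel u v ∧ WellOrderingRel v u) := fun h => asymm h.1 h.2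
    have hne := G.ne_of_adj huv
    simp only [Sym2.eq_swap (a := v), hu, hv, huv, huv.symm, true_and]
    clear_value claims
    tauto
  · let other (i : Fin m) : V := Sym2.Mem.other (hfS (⟨v, hv⟩, i)).2.2
    have hother (i : Fin m) : f (⟨v, hv⟩, i) = s(v, other i) := (Sym2.other_spec _).symm
    have hmem (i : Fin m) : other i ∈ S ∧ v ∈ S ∧ G.Adj (other i) v ∧ claims v s(other i, v) := by
      have h := hfS (⟨v, hv⟩, i)
      rw [hother, mem_sym2_iff, G.mem_edgeSet] at h
      exact ⟨h.1 _ (Sym2.mem_mk_right _ _), hv, h.2.1.symm, _, (hother i).trans Sym2.eq_swap, rfl⟩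
    simpa using card_le_card_of_injOn other (s := univ) (fun i _ => by simp [hmem i])
      fun i _ j _ hij => congrArg Prod.snd (hf ((hother i).trans (hij ▸ (hother j).symm)))

lemma exists_lt_sum_card_bipartiteAbove_fibers {ι : Type*} [Fintype ι] (c : V → ι)
    (W : Finset V) (t : ℕ) (h : 2 * Fintype.card ι * t * #W < ∑ v ∈ W, #{u ∈ W | G.Adj v u}) :
    ∃ i j, t * (#{v ∈ W | c v = i} + #{v ∈ W | c v = j}) <
      ∑ x ∈ {v ∈ W | c v = i}, #({v ∈ W | c v = j}.bipartiteAbove G.Adj x) := by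
  have hW : #W = ∑ i, #{v ∈ W | c v = i} := card_eq_sum_card_fiberwise fun _ _ => mem_univ _
  have hlhs : ∑ i, ∑ j, t * (#{v ∈ W | c v = i} + #{v ∈ W | c v = j}) =
      2 * Fintype.card ι * t * #W := by
    simp only [mul_add, sum_add_distrib, sum_const, card_univ, smul_eq_mul, ← mul_sum, ← hW]
    ring
  have hrhs : ∑ i, ∑ j, ∑ x ∈ {v ∈ W | c v = i}, #({v ∈ W | c v = j}.bipartiteAbove G.Adj x) =
      ∑ v ∈ W, #{u ∈ W | G.Adj v u} := by
    rw [← sum_fiberwise W c]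
    refine sum_congr rfl fun i _ => ?_
    rw [sum_comm]
    refine sum_congr rfl fun x _ => ?_
    simp only [bipartiteAbove, filter_filter]
    rw [card_eq_sum_card_fiberwise (f := c) (t := univ) fun _ _ => mem_univ _]
    simp only [filter_filter, and_comm]
  rw [← hlhs, ← hrhs] at h
  obtain ⟨i, -, hi⟩ := exists_lt_of_sum_lt h
  obtain ⟨j, -, hj⟩ := exists_lt_of_sum_lt hi
  exact ⟨i, j, hj⟩

/-- The lemma of Esperet, Kang and Thomassé, for the subgraph induced on `W`. -/
theorem exists_induced_bipartite_le_minDegree {ι : Type*} [Fintype ι] (C : G.Coloring ι)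
    (W : Finset V) (hW : W.Nonempty) (t : ℕ)
    (hdeg : ∀ v ∈ W, 2 * Fintype.card ι * t < #{u ∈ W | G.Adj v u}) :
    ∃ S ⊆ W, S.Nonempty ∧ (∃ σ : V → ZMod 2, ∀ u ∈ S, ∀ v ∈ S, G.Adj u v → σ u ≠ σ v) ∧
      ∀ v ∈ S, t ≤ #{u ∈ S | G.Adj v u} := by
  have hsum : 2 * Fintype.card ι * t * #W < ∑ v ∈ W, #{u ∈ W | G.Adj v u} := by
    simpa [mul_comm] using sum_lt_sum_of_nonempty hW hdeg
  obtain ⟨i, j, hij⟩ := G.exists_lt_sum_card_bipartiteAbove_fibers C W t hsum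
  obtain ⟨A, hA, B, hB, hAne, hAdeg, hBdeg⟩ := exists_subsets_le_card_bipartite_of_lt _ _ _ _ hij
  have hAi : ∀ a ∈ A, a ∈ W ∧ C a = i := fun a ha => mem_filter.mp (hA ha)
  have hBj : ∀ b ∈ B, b ∈ W ∧ C b = j := fun b hb => mem_filter.mp (hB hb)
  refine ⟨A ∪ B, union_subset (fun a ha => (hAi a ha).1) (fun b hb => (hBj b hb).1),
    hAne.mono subset_union_left, ⟨fun v => if C v = j then 1 else 0, ?_⟩, ?_⟩
  · have hcol : ∀ w ∈ A ∪ B, C w = i ∨ C w = j := fun w hw =>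
      (mem_union.mp hw).imp (fun h => (hAi w h).2) (fun h => (hBj w h).2)
    intro u hu v hv huv
    have hne := C.valid huv
    dsimp only
    rcases hcol u hu with hu | hu <;> rcases hcol v hv with hv | hv <;> rw [hu, hv] at hne ⊢
    all_goals simp_all [Ne.symm]
  · intro v hv
    rcases mem_union.mp hv with hv | hv
    · exact (hAdeg v hv).trans (card_le_card (filter_subset_filter _ subset_union_right))
    · refine (hBdeg v hv).trans (card_le_card fun u hu => ?_)
      simp only [bipartiteBelow, mem_filter] at hu ⊢
      exact ⟨subset_union_left hu.1, hu.2.symm⟩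

/-- Orienting every edge from `S` to `W \ S` away from `S`, a vertex `v ∈ S` has out-degree at
most `k`: its in-arcs within `S` make up for its excess degree in `W`. -/
structure IsPeel (k : ℕ) (W S : Finset V) (e : V → V → Prop) (σ : V → ZMod 2) : Prop where
  subset : S ⊆ W
  nonempty : S.Nonempty
  isOrientationOn : IsOrientationOn G S e
  ne_of_rel : ∀ ⦃u v⦄, e u v → σ u ≠ σ v
  card_adj_le : ∀ v ∈ S, #{u ∈ W | G.Adj v u} ≤ k + #{u ∈ S | e u v}

lemma exists_isLayeredBipartite_orientation (k : ℕ)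
    (hpeel : ∀ W : Finset V, W.Nonempty → ∃ S e σ, G.IsPeel k W S e σ) (W : Finset V) :
    ∃ dir g σ, IsOrientationOn G W dir ∧ IsLayeredBipartite dir g σ ∧
      ∀ v, #{u ∈ W | dir v u} ≤ k := by
  induction W using Finset.strongInduction with | H W ih =>
  obtain rfl | hW := W.eq_empty_or_nonempty
  · exact ⟨fun _ _ => False, 0, 0, ⟨fun _ _ h => h.elim, by simp⟩, fun _ _ h => h.elim, by simp⟩
  obtain ⟨S, e, σS, hS⟩ := hpeel W hW
  obtain ⟨f, g, σ, hf, hfg, hfk⟩ := ih (W \ S) (sdiff_ssubset hS.subset hS.nonempty)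
  have hST : Disjoint S (W \ S) := disjoint_sdiff
  have hW : S ∪ W \ S = W := union_sdiff_of_subset hS.subset
  generalize W \ S = T at hf hfg hfk hST hW
  subst hW
  have he := hS.isOrientationOn
  refine ⟨G.appendOrientation S T e f, _, _, he.appendOrientation hf hST,
    hfg.appendOrientation he hS.ne_of_rel hf hST, fun v => ?_⟩
  by_cases hv : v ∈ S
  · have hdeg := hS.card_adj_le v hv
    rw [filter_union, card_union_of_disjoint (disjoint_filter_filter hST),
      he.card_filter_adj hv] at hdeg
    rw [he.card_filter_appendOrientation_of_mem hf hST hv]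
    omega
  · rw [he.card_filter_appendOrientation_of_notMem hf hv]
    exact hfk v

lemma exists_isPeel {r d m : ℕ} (hmd : m * (4 * r + 1) ≤ d) (C : G.Coloring (Fin r))
    (W : Finset V) (hW : W.Nonempty) (hdeg : ∀ v ∈ W, #{u ∈ W | G.Adj v u} ≤ d) :
    ∃ S e σ, G.IsPeel (d - m) W S e σ := by
  by_cases hlow : ∃ v ∈ W, #{u ∈ W | G.Adj v u} ≤ d - m
  · obtain ⟨v, hv, hvd⟩ := hlow
    exact ⟨{v}, fun _ _ => False, 0, singleton_subset_iff.mpr hv, singleton_nonempty v,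
      ⟨fun _ _ h => h.elim, by simp⟩, fun _ _ h => h.elim, by simpa using hvd⟩
  push Not at hlow
  have hm : m ≤ d := le_trans (Nat.le_mul_of_pos_right m (by omega)) hmd
  obtain ⟨S, hSW, hSne, ⟨σ, hσ⟩, hSdeg⟩ := G.exists_induced_bipartite_le_minDegree C W hW (2 * m)
    fun v hv => by
      have := hlow v hv
      have := Nat.sub_add_cancel hm
      rw [Fintype.card_fin]
      linarith
  obtain ⟨e, he, hin⟩ := G.exists_isOrientationOn_le_card_inNeighbors S m hSdeg
  refine ⟨S, e, σ, hSW, hSne, he, fun u v huv => ?_, fun v hv => ?_⟩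
  · obtain ⟨hu, hv, huv⟩ := he.mem_adj huv
    exact hσ u hu v hv huv
  · have := hdeg v (hSW hv)
    have := hin v hv
    omega

lemma card_filter_adj_le_degree (W : Finset V) (v : V)
    [Fintype (G.neighborSet v)] : #{u ∈ W | G.Adj v u} ≤ G.degree v :=
  card_le_card fun u hu => (G.mem_neighborFinset v u).mpr (mem_filter.mp hu).2

end SimpleGraph

lemma Nat.cast_sub_div_le (d q : ℕ) : ((d - d / q : ℕ) : ℝ) ≤ (1 - 1 / q) * d + 1 := by
  have h : (d : ℝ) / q < (d / q : ℕ) + 1 :=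
    Nat.floor_div_eq_div (K := ℝ) d q ▸ Nat.lt_floor_add_one _
  rw [Nat.cast_sub (Nat.div_le_self d q)]
  linarith [show (1 - 1 / (q : ℝ)) * d = d - d / q by ring]

end

theorem statement4_general (r d : ℕ) {V : Type*} [Fintype V] (G : SimpleGraph V)
    [DecidableRel G.Adj] (hdeg : ∀ v, G.degree v ≤ d) (hcol : G.Colorable r) :
    (∃ o : GraphOrientation G, ¬ HasOddDirCycle o.dir ∧
      ∀ v, (outDeg o v : ℝ) ≤ (1 - 1 / (4 * r + 1)) * d + 1) ∧
    (ATNumber G : ℝ) ≤ (1 - 1 / (4 * r + 1)) * d + 2 := by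
  obtain ⟨C⟩ := hcol
  obtain ⟨dir, g, σ, hdir, hlayer, hout⟩ := G.exists_isLayeredBipartite_orientation
    (d - d / (4 * r + 1)) (fun W hW => G.exists_isPeel (Nat.div_mul_le_self d _) C W hW
      fun v _ => (G.card_filter_adj_le_degree W v).trans (hdeg v)) Finset.univ
  let o := hdir.toGraphOrientation
  have hout' : ∀ v, outDeg o v ≤ d - d / (4 * r + 1) := fun v =>
    hdir.outDeg_toGraphOrientation v ▸ hout v
  have hbound := Nat.cast_sub_div_le d (4 * r + 1)
  push_cast at hbound
  refine ⟨⟨o, hlayer.not_hasOddDirCycle, fun v => (Nat.cast_le.mpr (hout' v)).trans hbound⟩, ?_⟩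
  have hAT := ATNumber_le_of_alonTarsiOrientation (o := o) hlayer.alonTarsiOrientation hout'
  have : (ATNumber G : ℝ) ≤ (d - d / (4 * r + 1) : ℕ) + 1 := by exact_mod_cast hAT
  linarith

/-- For integers `r ≥ 2`, `d ≥ 0`, every graph of maximum degree at most
`d` and chromatic number at most `r` has an orientation with no directed odd cycle and all
out-degrees at most `(1 - 1/(4r+1))·d + 1`; consequently `AT(G) ≤ (1 - 1/(4r+1))·d + 2`. -/
theorem statement4 (r d : ℕ) (hr : 2 ≤ r) {V : Type*} [Fintype V] (G : SimpleGraph V)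
    [DecidableRel G.Adj] (hdeg : ∀ v, G.degree v ≤ d) (hcol : G.Colorable r) :
    (∃ o : GraphOrientation G, ¬ HasOddDirCycle o.dir ∧
      ∀ v, (outDeg o v : ℝ) ≤ (1 - 1 / (4 * r + 1)) * d + 1) ∧
    (ATNumber G : ℝ) ≤ (1 - 1 / (4 * r + 1)) * d + 2 :=
  statement4_general r d G hdeg hcol
end

section
/- If a graph G is f-removable (i.e., all vertices can be deleted by legal DelSave operations), then G admits an orientation in which every vertex v has out-degree strictly less than f(v). -/
open scoped Classical in
/-- `Removable G S f`: all vertices of `S` (the remaining vertices of `G`) can be deleted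
by legal `DelSave` operations. Deleting `u` with save-set `W ⊆ N(u)` is legal if
`f u > ∑_{w ∈ W} f w` and afterwards every remaining vertex keeps a positive value;
each deleted vertex decreases `f` by one on its unsaved neighbors. -/
inductive Removable {V : Type*} [DecidableEq V] (G : SimpleGraph V) :
    Finset V → (V → ℕ) → Prop
  | empty (f : V → ℕ) : Removable G ∅ f
  | step (S : Finset V) (f : V → ℕ) (u : V) (W : Finset V)
      (hu : u ∈ S)
      (hW : ∀ w ∈ W, w ∈ S.erase u ∧ G.Adj u w)
      (hlegal : ∑ w ∈ W, f w < f u)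
      (hpos : ∀ v ∈ S.erase u, 1 ≤ (if G.Adj u v ∧ v ∉ W then f v - 1 else f v))
      (hrec : Removable G (S.erase u) (fun v => if G.Adj u v ∧ v ∉ W then f v - 1 else f v)) :
      Removable G S f

/-!
Orient each edge when its first endpoint `u` is deleted: towards `u`'s save-set `W`, and into
`u` otherwise. Then `u` ends with out-degree `|W| ≤ ∑_{w ∈ W} f w < f u`, the first inequality
because the saved vertices still carry positive values. Every other out-edge is created at a
deletion that also takes one token from its tail, so each remaining vertex keeps out-degree below
its current value.
-/

namespace SimpleGraph

variable {V : Type*} {G : SimpleGraph V}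

structure OrientationOn (G : SimpleGraph V) (S : Finset V) where
  dir : V → V → Prop
  mem_left : ∀ a b, dir a b → a ∈ S
  mem_right : ∀ a b, dir a b → b ∈ S
  adj : ∀ a b, dir a b → G.Adj a b
  total : ∀ a ∈ S, ∀ b ∈ S, G.Adj a b → dir a b ∨ dir b a
  antisymm : ∀ a b, dir a b → ¬ dir b a

namespace OrientationOn

variable {S : Finset V}

theorem finite_setOf_dir (o : G.OrientationOn S) (v : V) : {b | o.dir v b}.Finite :=
  S.finite_toSet.subset fun b => o.mem_right v b

noncomputable def outDeg (o : G.OrientationOn S) (v : V) : ℕ :=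
  Set.ncard {b | o.dir v b}

def empty (G : SimpleGraph V) : G.OrientationOn ∅ where
  dir _ _ := False
  mem_left _ _ := False.elim
  mem_right _ _ := False.elim
  adj _ _ := False.elim
  total a ha := absurd ha (Finset.notMem_empty a)
  antisymm _ _ := False.elim

def toGraphOrientation [Fintype V] (o : G.OrientationOn Finset.univ) : GraphOrientation G where
  dir := o.dir
  consistent a b :=
    ⟨o.total a (Finset.mem_univ a) b (Finset.mem_univ b),
      fun h => h.elim (o.adj a b) fun hba => (o.adj b a hba).symm⟩
  antisymm := o.antisymm

variable [DecidableEq V] {u : V} {W : Finset V}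

def extend (o : G.OrientationOn (S.erase u)) (hu : u ∈ S)
    (hW : ∀ w ∈ W, w ∈ S.erase u ∧ G.Adj u w) : G.OrientationOn S where
  dir a b := o.dir a b ∨ (a = u ∧ b ∈ W) ∨ (b = u ∧ a ∈ S ∧ G.Adj u a ∧ a ∉ W)
  mem_left := by
    rintro a b (h | ⟨rfl, -⟩ | ⟨-, ha, -⟩)
    exacts [Finset.mem_of_mem_erase (o.mem_left a b h), hu, ha]
  mem_right := by
    rintro a b (h | ⟨-, hb⟩ | ⟨rfl, -⟩)
    exacts [Finset.mem_of_mem_erase (o.mem_right a b h), Finset.mem_of_mem_erase (hW b hb).1, hu]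
  adj := by
    rintro a b (h | ⟨rfl, hb⟩ | ⟨rfl, -, hadj, -⟩)
    exacts [o.adj a b h, (hW b hb).2, hadj.symm]
  total a ha b hb hab := by
    by_cases hau : a = u
    · subst hau
      by_cases hbW : b ∈ W
      · exact Or.inl (Or.inr (Or.inl ⟨rfl, hbW⟩))
      · exact Or.inr (Or.inr (Or.inr ⟨rfl, hb, hab, hbW⟩))
    by_cases hbu : b = u
    · subst hbu
      by_cases haW : a ∈ W
      · exact Or.inr (Or.inr (Or.inl ⟨rfl, haW⟩))
      · exact Or.inl (Or.inr (Or.inr ⟨rfl, ha, hab.symm, haW⟩))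
    exact (o.total a (Finset.mem_erase.2 ⟨hau, ha⟩) b (Finset.mem_erase.2 ⟨hbu, hb⟩) hab).imp
      Or.inl Or.inl
  antisymm := by
    have not_left : ∀ b, ¬ o.dir u b := fun b h => Finset.notMem_erase u S (o.mem_left u b h)
    have not_right : ∀ a, ¬ o.dir a u := fun a h => Finset.notMem_erase u S (o.mem_right a u h)
    have hWu : u ∉ W := fun h => Finset.notMem_erase u S (hW u h).1
    rintro a b (hab | ⟨hau, hbW⟩ | ⟨hbu, -, hadj, haW⟩) (hba | ⟨hbu', haW'⟩ | ⟨hau', -, hadj', hbW'⟩)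
    exacts [o.antisymm a b hab hba, not_right a (hbu' ▸ hab), not_left b (hau' ▸ hab),
      not_right b (hau ▸ hba), hWu (hbu' ▸ hbW), hbW' hbW,
      not_left a (hbu ▸ hba), haW haW', G.irrefl (hau' ▸ hadj)]

theorem outDeg_extend_self (o : G.OrientationOn (S.erase u)) (hu : u ∈ S)
    (hW : ∀ w ∈ W, w ∈ S.erase u ∧ G.Adj u w) : (o.extend hu hW).outDeg u = W.card := by
  have hout : {b | (o.extend hu hW).dir u b} = (W : Set V) := by
    ext b
    simp only [extend, Set.mem_ofPred_eq, Finset.mem_coe, true_and, SimpleGraph.irrefl,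
      false_and, and_false, or_false]
    exact ⟨fun h => h.resolve_left fun hub => Finset.notMem_erase u S (o.mem_left u b hub),
      Or.inr⟩
  rw [outDeg, hout, Set.ncard_coe_finset]

open scoped Classical in
theorem outDeg_extend_of_ne (o : G.OrientationOn (S.erase u)) (hu : u ∈ S)
    (hW : ∀ w ∈ W, w ∈ S.erase u ∧ G.Adj u w) {v : V} (hv : v ∈ S) (hvu : v ≠ u) :
    (o.extend hu hW).outDeg v = o.outDeg v + if G.Adj u v ∧ v ∉ W then 1 else 0 := by
  have hu_not : u ∉ {b | o.dir v b} := fun h => Finset.notMem_erase u S (o.mem_right v u h)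
  split_ifs with hc
  · have hout : {b | (o.extend hu hW).dir v b} = insert u {b | o.dir v b} := by
      ext b
      simp only [extend, Set.mem_ofPred_eq, Set.mem_insert_iff, hvu, false_and, false_or]
      constructor
      · rintro (h | ⟨rfl, -⟩)
        exacts [Or.inr h, Or.inl rfl]
      · rintro (rfl | h)
        exacts [Or.inr ⟨rfl, hv, hc⟩, Or.inl h]
    rw [outDeg, hout, Set.ncard_insert_of_notMem hu_not (o.finite_setOf_dir v), outDeg]
  · have hout : {b | (o.extend hu hW).dir v b} = {b | o.dir v b} := by
      ext b
      simp only [extend, Set.mem_ofPred_eq, hvu, false_and, false_or, or_iff_left_iff_imp]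
      exact fun h => absurd ⟨h.2.2.1, h.2.2.2⟩ hc
    rw [outDeg, hout, outDeg, add_zero]

end OrientationOn

end SimpleGraph

open SimpleGraph in
theorem Removable.exists_orientationOn {V : Type*} [DecidableEq V] {G : SimpleGraph V}
    {S : Finset V} {f : V → ℕ} (h : Removable G S f) :
    ∃ o : G.OrientationOn S, ∀ v ∈ S, o.outDeg v < f v := by
  induction h with
  | empty f => exact ⟨OrientationOn.empty G, fun v hv => absurd hv (Finset.notMem_empty v)⟩
  | step S f u W hu hW hlegal hpos _ ih =>
    obtain ⟨o, ho⟩ := ih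
    refine ⟨o.extend hu hW, fun v hv => ?_⟩
    by_cases hvu : v = u
    · subst hvu
      have hfW : ∀ w ∈ W, 1 ≤ f w := fun w hw => by
        simpa [hw] using hpos w (hW w hw).1
      calc (o.extend hv hW).outDeg v = W.card := o.outDeg_extend_self hv hW
        _ = ∑ _w ∈ W, 1 := Finset.card_eq_sum_ones W
        _ ≤ ∑ w ∈ W, f w := Finset.sum_le_sum hfW
        _ < f v := hlegal
    · have hv' := ho v (Finset.mem_erase.2 ⟨hvu, hv⟩)
      rw [o.outDeg_extend_of_ne hu hW hv hvu]
      dsimp only at hv'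
      split_ifs at hv' ⊢ <;> omega

/-- If `G` is `f`-removable, then `G` has an orientation in which every
vertex `v` has out-degree strictly less than `f v`. -/
theorem statement7 {V : Type*} [Fintype V] [DecidableEq V] (G : SimpleGraph V) (f : V → ℕ)
    (h : Removable G Finset.univ f) :
    ∃ o : GraphOrientation G, ∀ v, outDeg o v < f v := by
  obtain ⟨o, ho⟩ := h.exists_orientationOn
  exact ⟨o.toGraphOrientation, fun v => ho v (Finset.mem_univ v)⟩
end

section
/- Let G be a graph that is f-removable with constant function f ≡ k, and let G' be obtained from G by deleting a vertex v such that in some removal scheme, v is saved by every earlier-deleted neighbor and v saves no later-deleted neighbor. Then G' is h-removable where h(u) = k − 1 for u ∈ N(v) and h(u) = k otherwise. -/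
open scoped Classical in
/-- `ValidScheme G L S f`: the list `L` of (vertex, save-set) pairs is a legal removal
scheme deleting all vertices of `S`, starting from the token function `f`. -/
def ValidScheme {V : Type*} [DecidableEq V] (G : SimpleGraph V) :
    List (V × Finset V) → Finset V → (V → ℕ) → Prop
  | [], S, _ => S = ∅
  | (u, W) :: rest, S, f =>
      u ∈ S ∧ (∀ w ∈ W, w ∈ S.erase u ∧ G.Adj u w) ∧ (∑ w ∈ W, f w < f u) ∧
      (∀ v ∈ S.erase u, 1 ≤ (if G.Adj u v ∧ v ∉ W then f v - 1 else f v)) ∧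
      ValidScheme G rest (S.erase u) (fun v => if G.Adj u v ∧ v ∉ W then f v - 1 else f v)

section Aux
open scoped Classical
variable {V : Type*} [DecidableEq V] (G : SimpleGraph V)

/-- `ValidScheme` only depends on values of `f` on `S`. -/
lemma vs_congr : ∀ (L : List (V × Finset V)) (S : Finset V) (f g : V → ℕ),
    ValidScheme G L S f → (∀ x ∈ S, f x = g x) → ValidScheme G L S g := by
  intro L
  induction L with
  | nil => intro S f g h _; exact h
  | cons p rest ih =>
    obtain ⟨u, W⟩ := p
    rintro S f g ⟨hu, hW, hlegal, hpos, hrec⟩ hfg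
    have hSu : ∀ x ∈ S.erase u, f x = g x := fun x hx => hfg x (Finset.mem_of_mem_erase hx)
    refine ⟨hu, hW, ?_, ?_, ?_⟩
    · have : ∑ w ∈ W, f w = ∑ w ∈ W, g w :=
        Finset.sum_congr rfl (fun w hw => hSu w (hW w hw).1)
      rw [← this, ← hfg u hu]; exact hlegal
    · intro x hx
      have := hpos x hx
      rw [hSu x hx] at this; exact this
    · exact ih _ _ _ hrec (fun x hx => by rw [hSu x hx])

lemma vs_removable : ∀ (L : List (V × Finset V)) (S : Finset V) (f : V → ℕ),
    ValidScheme G L S f → Removable G S f := by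
  intro L
  induction L with
  | nil => intro S f h; rw [show S = ∅ from h]; exact Removable.empty f
  | cons p rest ih =>
    obtain ⟨u, W⟩ := p
    rintro S f ⟨hu, hW, hlegal, hpos, hrec⟩
    exact Removable.step S f u W hu hW hlegal hpos (ih _ _ hrec)

lemma vs_get_mem : ∀ (L : List (V × Finset V)) (S : Finset V) (f : V → ℕ),
    ValidScheme G L S f → ∀ j (hj : j < L.length), (L.get ⟨j, hj⟩).1 ∈ S := by
  intro L
  induction L with
  | nil => intro S f _ j hj; simp at hj
  | cons p rest ih =>
    obtain ⟨u, W⟩ := p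
    rintro S f ⟨hu, hW, hlegal, hpos, hrec⟩ j hj
    cases j with
    | zero => exact hu
    | succ j =>
      have := ih _ _ hrec j (by simpa using hj)
      exact Finset.mem_of_mem_erase this

lemma vs_exists_get : ∀ (L : List (V × Finset V)) (S : Finset V) (f : V → ℕ),
    ValidScheme G L S f → ∀ x ∈ S, ∃ j, ∃ hj : j < L.length, (L.get ⟨j, hj⟩).1 = x := by
  intro L
  induction L with
  | nil => intro S f h x hx; rw [show S = ∅ from h] at hx; simp at hx
  | cons p rest ih =>
    obtain ⟨u, W⟩ := p
    rintro S f ⟨hu, hW, hlegal, hpos, hrec⟩ x hx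
    by_cases hxu : x = u
    · exact ⟨0, by simp, hxu.symm⟩
    · obtain ⟨j, hj, hget⟩ := ih _ _ hrec x (Finset.mem_erase.2 ⟨hxu, hx⟩)
      exact ⟨j + 1, by simpa using Nat.succ_lt_succ hj, hget⟩

/-- If no later-deleted vertex belongs to the save set at step `i`, that save set is empty. -/
lemma vs_save_empty : ∀ (L : List (V × Finset V)) (S : Finset V) (f : V → ℕ),
    ValidScheme G L S f → ∀ i (hi : i < L.length),
    (∀ j (hj : j < L.length), i < j → (L.get ⟨j, hj⟩).1 ∉ (L.get ⟨i, hi⟩).2) →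
    (L.get ⟨i, hi⟩).2 = ∅ := by
  intro L
  induction L with
  | nil => intro S f _ i hi; simp at hi
  | cons p rest ih =>
    obtain ⟨u, W⟩ := p
    rintro S f ⟨hu, hW, hlegal, hpos, hrec⟩ i hi hafter
    cases i with
    | zero =>
      simp only [List.get] at hafter ⊢
      apply Finset.eq_empty_of_forall_notMem
      intro w hw
      have hwS : w ∈ S.erase u := (hW w hw).1
      obtain ⟨j, hj, hget⟩ := vs_exists_get G rest _ _ hrec w hwS
      have := hafter (j + 1) (by simpa using Nat.succ_lt_succ hj) (Nat.succ_pos j)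
      simp only [List.get] at this
      exact this (hget ▸ hw)
    | succ i =>
      simp only [List.get]
      exact ih _ _ hrec i (by simpa using hi) (fun j hj hij => by
        have := hafter (j + 1) (by simpa using Nat.succ_lt_succ hj) (Nat.succ_lt_succ hij)
        simpa only [List.get] using this)

/-- Until `v` is deleted (being saved by all earlier neighbors, with empty save set itself),
`v` has positive value and every remaining neighbor of `v` has value at least 2. -/
lemma vs_two : ∀ (L : List (V × Finset V)) (S : Finset V) (f : V → ℕ) (v : V),
    ValidScheme G L S f → ∀ i (hi : i < L.length), (L.get ⟨i, hi⟩).1 = v →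
    (∀ j (hj : j < L.length), j < i → G.Adj (L.get ⟨j, hj⟩).1 v → v ∈ (L.get ⟨j, hj⟩).2) →
    (L.get ⟨i, hi⟩).2 = ∅ →
    1 ≤ f v ∧ ∀ x ∈ S, x ≠ v → G.Adj v x → 2 ≤ f x := by
  intro L
  induction L with
  | nil => intro S f v _ i hi; simp at hi
  | cons p rest ih =>
    obtain ⟨u, W⟩ := p
    rintro S f v ⟨hu, hW, hlegal, hpos, hrec⟩ i hi hgetv hbefore hWempty
    cases i with
    | zero =>
      simp only [List.get] at hgetv hWempty
      subst hgetv; subst hWempty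
      constructor
      · have : (0:ℕ) < f u := by simpa using hlegal
        omega
      · intro x hx hxv hadj
        have hx' : x ∈ S.erase u := Finset.mem_erase.2 ⟨hxv, hx⟩
        have := hpos x hx'
        rw [if_pos ⟨hadj, Finset.notMem_empty x⟩] at this
        omega
    | succ i =>
      simp only [List.get] at hgetv hWempty
      have hvrest : v ∈ S.erase u := hgetv ▸ vs_get_mem G rest _ _ hrec i (by simpa using hi) 
      have hvu : v ≠ u := (Finset.mem_erase.1 hvrest).1
      have hbefore' : ∀ j (hj : j < rest.length), j < i →
          G.Adj (rest.get ⟨j, hj⟩).1 v → v ∈ (rest.get ⟨j, hj⟩).2 := by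
        intro j hj hji hadj
        have := hbefore (j + 1) (by simpa using Nat.succ_lt_succ hj) (Nat.succ_lt_succ hji)
        simp only [List.get] at this
        exact this hadj
      obtain ⟨ih1, ih2⟩ := ih _ _ v hrec i (by simpa using hi) hgetv hbefore' hWempty
      have ih1' : 1 ≤ (if G.Adj u v ∧ v ∉ W then f v - 1 else f v) := ih1
      have hfv : f v = (if G.Adj u v ∧ v ∉ W then f v - 1 else f v) := by
        by_cases hadj : G.Adj u v
        · have hvW : v ∈ W := by
            have := hbefore 0 (by simp) (Nat.succ_pos i)
            simp only [List.get] at this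
            exact this hadj
          simp [hvW]
        · simp [hadj]
      constructor
      · rw [hfv]; exact ih1'
      · intro x hx hxv hadj
        by_cases hxu : x = u
        · subst hxu
          have hadjuv : G.Adj x v := G.adj_symm hadj
          have hvW : v ∈ W := by
            have := hbefore 0 (by simp) (Nat.succ_pos i)
            simp only [List.get] at this
            exact this hadjuv
          have hsum : f v ≤ ∑ w ∈ W, f w := Finset.single_le_sum (fun _ _ => Nat.zero_le _) hvW
          have h1 : 1 ≤ f v := hfv ▸ ih1'
          omega
        · have h2 : 2 ≤ (if G.Adj u x ∧ x ∉ W then f x - 1 else f x) :=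
            ih2 x (Finset.mem_erase.2 ⟨hxu, hx⟩) hxv hadj
          have hle : (if G.Adj u x ∧ x ∉ W then f x - 1 else f x) ≤ f x := by
            split_ifs <;> omega
          omega

/-- Main lemma: removing `v`'s step (whose save set is empty) and erasing `v` from all
earlier save sets yields a valid scheme on `S.erase v` for the decremented function. -/
lemma vs_main (v : V) : ∀ (L : List (V × Finset V)) (i : ℕ) (S : Finset V) (f : V → ℕ)
    (hi : i < L.length), ValidScheme G L S f → (L.get ⟨i, hi⟩).1 = v →
    (∀ j (hj : j < L.length), j < i → G.Adj (L.get ⟨j, hj⟩).1 v → v ∈ (L.get ⟨j, hj⟩).2) →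
    (L.get ⟨i, hi⟩).2 = ∅ →
    ValidScheme G ((L.take i).map (fun p => (p.1, p.2.erase v)) ++ L.drop (i + 1))
      (S.erase v) (fun x => if G.Adj v x then f x - 1 else f x) := by
  intro L
  induction L with
  | nil => intro i S f hi; simp at hi
  | cons p rest ih =>
    obtain ⟨u, W⟩ := p
    rintro i S f hi ⟨hu, hW, hlegal, hpos, hrec⟩ hgetv hbefore hWempty
    cases i with
    | zero =>
      simp only [List.get] at hgetv hWempty
      subst hgetv; subst hWempty
      simp only [List.take, List.map_nil, List.drop, List.nil_append]
      refine vs_congr G rest _ _ _ hrec ?_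
      intro x hx
      have hxu : x ≠ u := (Finset.mem_erase.1 hx).1
      simp
    | succ i =>
      simp only [List.get] at hgetv hWempty
      have hi' : i < rest.length := by simpa using hi
      have hbefore' : ∀ j (hj : j < rest.length), j < i →
          G.Adj (rest.get ⟨j, hj⟩).1 v → v ∈ (rest.get ⟨j, hj⟩).2 := by
        intro j hj hji hadj
        have := hbefore (j + 1) (by simpa using Nat.succ_lt_succ hj) (Nat.succ_lt_succ hji)
        simp only [List.get] at this
        exact this hadj
      have hb0 : G.Adj u v → v ∈ W := by
        intro hadj
        have := hbefore 0 (by simp) (Nat.succ_pos i)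
        simp only [List.get] at this
        exact this hadj
      have hvS : v ∈ S.erase u :=
        hgetv ▸ vs_get_mem G rest _ _ hrec i hi'
      have hvu : v ≠ u := (Finset.mem_erase.1 hvS).1
      -- key facts from vs_two on the full list
      obtain ⟨hfv1, hf2⟩ := vs_two G ((u, W) :: rest) S f v
        ⟨hu, hW, hlegal, hpos, hrec⟩ (i + 1) hi (by simpa [List.get] using hgetv)
        hbefore (by simpa [List.get] using hWempty)
      -- the new scheme at this step
      simp only [List.take, List.map_cons, List.drop, List.cons_append]
      refine ⟨?_, ?_, ?_, ?_, ?_⟩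
      · exact Finset.mem_erase.2 ⟨fun h => hvu h.symm, hu⟩
      · intro w hw
        obtain ⟨hwv, hwW⟩ := Finset.mem_erase.1 hw
        obtain ⟨hwSu, hadj⟩ := hW w hwW
        obtain ⟨hwu, hwS⟩ := Finset.mem_erase.1 hwSu
        exact ⟨Finset.mem_erase.2 ⟨hwu, Finset.mem_erase.2 ⟨hwv, hwS⟩⟩, hadj⟩
      · -- legality of the head step
        beta_reduce
        by_cases hadj : G.Adj u v
        · have hvW : v ∈ W := hb0 hadj
          have hsum : f v + ∑ w ∈ W.erase v, f w = ∑ w ∈ W, f w :=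
            Finset.add_sum_erase W f hvW
          have hle : ∑ w ∈ W.erase v, (if G.Adj v w then f w - 1 else f w)
              ≤ ∑ w ∈ W.erase v, f w :=
            Finset.sum_le_sum (fun w _ => by split_ifs <;> omega)
          have huv : G.Adj v u := hadj.symm
          rw [if_pos huv]
          omega
        · have hvW : v ∉ W := fun h => hadj ((hW v h).2)
          rw [Finset.erase_eq_of_notMem hvW]
          have hle : ∑ w ∈ W, (if G.Adj v w then f w - 1 else f w) ≤ ∑ w ∈ W, f w :=
            Finset.sum_le_sum (fun w _ => by split_ifs <;> omega)
          have huv : ¬ G.Adj v u := fun h => hadj h.symm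
          rw [if_neg huv]
          omega
      · -- positivity after the head step
        intro x hx
        beta_reduce
        obtain ⟨hxu, hxErase⟩ := Finset.mem_erase.1 hx
        obtain ⟨hxv, hxS⟩ := Finset.mem_erase.1 hxErase
        have hxSu : x ∈ S.erase u := Finset.mem_erase.2 ⟨hxu, hxS⟩
        have hposx := hpos x hxSu
        have hWiff : x ∉ W.erase v ↔ x ∉ W := by
          simp [Finset.mem_erase, hxv]
        by_cases hvx : G.Adj v x
        · -- x is a remaining neighbor of v: value ≥ 2 after old step, via vs_two on rest
          obtain ⟨_, h2⟩ := vs_two G rest (S.erase u)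
            (fun y => if G.Adj u y ∧ y ∉ W then f y - 1 else f y) v hrec i hi' hgetv
            hbefore' hWempty
          have h2x : 2 ≤ (if G.Adj u x ∧ x ∉ W then f x - 1 else f x) :=
            h2 x hxSu hxv hvx
          by_cases hc : G.Adj u x ∧ x ∉ W
          · rw [if_pos (by exact ⟨hc.1, hWiff.2 hc.2⟩), if_pos hvx]
            rw [if_pos hc] at h2x
            omega
          · have hc' : ¬ (G.Adj u x ∧ x ∉ W.erase v) := fun h => hc ⟨h.1, hWiff.1 h.2⟩
            rw [if_neg hc', if_pos hvx]
            rw [if_neg hc] at h2x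
            omega
        · by_cases hc : G.Adj u x ∧ x ∉ W
          · rw [if_pos (by exact ⟨hc.1, hWiff.2 hc.2⟩), if_neg hvx]
            rw [if_pos hc] at hposx
            omega
          · have hc' : ¬ (G.Adj u x ∧ x ∉ W.erase v) := fun h => hc ⟨h.1, hWiff.1 h.2⟩
            rw [if_neg hc', if_neg hvx]
            rw [if_neg hc] at hposx
            omega
      · -- recursive call
        have hrec' := ih i (S.erase u)
          (fun y => if G.Adj u y ∧ y ∉ W then f y - 1 else f y) hi' hrec hgetv
          hbefore' hWempty
        rw [Finset.erase_right_comm] at hrec'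
        refine vs_congr G _ _ _ _ hrec' ?_
        intro x hx
        obtain ⟨hxu, hxErase⟩ := Finset.mem_erase.1 hx
        obtain ⟨hxv, _⟩ := Finset.mem_erase.1 hxErase
        have hWiff : x ∉ W.erase v ↔ x ∉ W := by
          simp [Finset.mem_erase, hxv]
        show (if G.Adj v x then (if G.Adj u x ∧ x ∉ W then f x - 1 else f x) - 1
              else (if G.Adj u x ∧ x ∉ W then f x - 1 else f x)) =
          (if G.Adj u x ∧ x ∉ W.erase v then (if G.Adj v x then f x - 1 else f x) - 1
            else (if G.Adj v x then f x - 1 else f x))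
        by_cases hc : G.Adj u x ∧ x ∉ W
        · have hc' : G.Adj u x ∧ x ∉ W.erase v := ⟨hc.1, hWiff.2 hc.2⟩
          rw [if_pos hc, if_pos hc']
          by_cases hvx : G.Adj v x
          · rw [if_pos hvx, if_pos hvx]
          · rw [if_neg hvx, if_neg hvx]
        · have hc' : ¬(G.Adj u x ∧ x ∉ W.erase v) := fun h => hc ⟨h.1, hWiff.1 h.2⟩
          rw [if_neg hc, if_neg hc']
end Aux

/-- Suppose `G` is removable with the constant token function `k` via a
removal scheme `L`, and `v` is a vertex such that every neighbor of `v` deleted before `v`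
saves `v`, and `v` saves no neighbor deleted after `v`. Then `G - v` is removable for the
function equal to `k - 1` on the neighbors of `v` and `k` elsewhere. -/
theorem statement8 {V : Type*} [Fintype V] [DecidableEq V] (G : SimpleGraph V)
    [DecidableRel G.Adj] (k : ℕ)
    (L : List (V × Finset V)) (hL : ValidScheme G L Finset.univ (fun _ => k))
    (v : V) (i : ℕ) (hi : i < L.length) (hv : (L.get ⟨i, hi⟩).1 = v)
    (hbefore : ∀ j (hj : j < L.length), j < i →
      G.Adj (L.get ⟨j, hj⟩).1 v → v ∈ (L.get ⟨j, hj⟩).2)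
    (hafter : ∀ j (hj : j < L.length), i < j → (L.get ⟨j, hj⟩).1 ∉ (L.get ⟨i, hi⟩).2) :
    Removable G (Finset.univ.erase v) (fun u => if G.Adj v u then k - 1 else k) := by
  have hWi : (L.get ⟨i, hi⟩).2 = ∅ := vs_save_empty G L Finset.univ _ hL i hi hafter
  have hmain := vs_main G v L i Finset.univ (fun _ => k) hi hL hv hbefore hWi
  refine vs_removable G _ _ _ (vs_congr G _ _ _ _ hmain ?_)
  intro x _
  by_cases h : G.Adj v x <;> simp [h]
end

section
/- For every n ≥ 1, if the complete bipartite graph K_{n,n} is k-removable (for the constant function f ≡ k), then k > n − √(2n(log n + 1)). -/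
noncomputable section

open Finset
open scoped Classical

theorem harmonic_sub_pred_nonneg (d a : ℕ) :
    (0 : ℝ) ≤ (harmonic (a - d) : ℝ) - harmonic (a - 1 - d) := by
  by_cases had : d < a
  · rw [show a - d = a - 1 - d + 1 by omega, harmonic_succ, Rat.cast_add, add_sub_cancel_left]
    positivity
  · rw [show a - d = 0 by omega, show a - 1 - d = 0 by omega, sub_self]

theorem harmonic_sub_pred_of_lt {d a : ℕ} (had : d < a) :
    (harmonic (a - d) : ℝ) - harmonic (a - 1 - d) = ((a : ℝ) - d)⁻¹ := by
  rw [show a - d = a - 1 - d + 1 by omega, harmonic_succ, show a - 1 - d + 1 = a - d by omega]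
  push_cast [had.le]
  ring

theorem completeBipartiteGraph_adj_iff_not_adj {α β : Type*} {u w : α ⊕ β}
    (h : (completeBipartiteGraph α β).Adj u w) (v : α ⊕ β) :
    (completeBipartiteGraph α β).Adj w v ↔ ¬(completeBipartiteGraph α β).Adj u v := by
  rcases u with _ | _ <;> rcases w with _ | _ <;> rcases v with _ | _ <;> simp_all

namespace Removable

section Graph

variable {V : Type*} [DecidableEq V] (G : SimpleGraph V)

def delSave (u : V) (W : Finset V) (f : V → ℕ) : V → ℕ :=
  fun v => if G.Adj u v ∧ v ∉ W then f v - 1 else f v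

def degIn (S : Finset V) (v : V) : ℕ := #{w ∈ S | G.Adj v w}

def slack (d : ℕ) (S : Finset V) (f : V → ℕ) (v : V) : ℤ := f v + d - degIn G S v

def Invariant (k d : ℕ) (S : Finset V) (f : V → ℕ) : Prop :=
  ∀ v ∈ S, f v ≤ k ∧ 0 ≤ slack G d S f v

variable {G} {S W : Finset V} {f : V → ℕ} {u : V} {d k : ℕ}

theorem exists_pos (h : Removable G S f) (hS : S.Nonempty) : ∃ u ∈ S, 0 < f u := by
  cases h with
  | empty => simp at hS
  | step S f u W hu _ hlegal => exact ⟨u, hu, by omega⟩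

theorem degIn_erase_add (hu : u ∈ S) (v : V) :
    degIn G (S.erase u) v + (if G.Adj u v then 1 else 0) = degIn G S v := by
  unfold degIn
  rw [filter_erase]
  split_ifs with huv
  · exact card_erase_add_one (mem_filter.2 ⟨hu, huv.symm⟩)
  · rw [erase_eq_of_notMem fun h => huv (mem_filter.1 h).2.symm, add_zero]

theorem slack_delSave (hu : u ∈ S) (hW : ∀ w ∈ W, G.Adj u w) {v : V}
    (hpos : 1 ≤ delSave G u W f v) :
    slack G d (S.erase u) (delSave G u W f) v = slack G d S f v + if v ∈ W then 1 else 0 := by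
  have hdeg := degIn_erase_add hu v (G := G)
  unfold slack
  unfold delSave at hpos ⊢
  by_cases huv : G.Adj u v
  · by_cases hvW : v ∈ W <;> simp [huv, hvW] at hdeg hpos ⊢ <;> omega
  · have hvW : v ∉ W := fun h => huv (hW v h)
    simp [huv, hvW] at hdeg ⊢
    omega

theorem sum_slack_delSave (hu : u ∈ S) (hW : ∀ w ∈ W, w ∈ S.erase u ∧ G.Adj u w)
    (hpos : ∀ v ∈ S.erase u, 1 ≤ delSave G u W f v) :
    ∑ v ∈ S.erase u, slack G d (S.erase u) (delSave G u W f) v =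
      ∑ v ∈ S, slack G d S f v - slack G d S f u + #W := by
  rw [sum_congr rfl fun v hv => slack_delSave hu (fun w hw => (hW w hw).2) (hpos v hv),
    sum_add_distrib, sum_ite_mem, inter_eq_right.2 fun w hw => (hW w hw).1,
    ← sum_erase_add S _ hu]
  simp

theorem Invariant.delSave (hinv : Invariant G k d S f) (hu : u ∈ S)
    (hW : ∀ w ∈ W, G.Adj u w) (hpos : ∀ v ∈ S.erase u, 1 ≤ delSave G u W f v) :
    Invariant G k d (S.erase u) (delSave G u W f) := by
  intro v hv
  obtain ⟨hfk, hslack⟩ := hinv v (mem_of_mem_erase hv)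
  refine ⟨?_, ?_⟩
  · unfold Removable.delSave
    split_ifs <;> omega
  · rw [slack_delSave hu hW (hpos v hv)]
    split_ifs <;> omega

end Graph

section Counting

variable {k d : ℕ}

def cornerArea (d a b : ℕ) : ℝ :=
  (d + 1) ^ 2 - if a ≤ d + 1 ∨ b ≤ d + 1 then ((d : ℝ) + 1 - a) * (d + 1 - b) else 0

def countPotential (k d a b : ℕ) : ℝ :=
  cornerArea d a b - (k - 1) * ((harmonic (a - d) : ℝ) + harmonic (b - d))

theorem cornerArea_comm (d a b : ℕ) : cornerArea d a b = cornerArea d b a := by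
  simp only [cornerArea, or_comm (a := a ≤ d + 1), mul_comm ((d : ℝ) + 1 - a)]

theorem countPotential_comm (k d a b : ℕ) : countPotential k d a b = countPotential k d b a := by
  rw [countPotential, countPotential, cornerArea_comm, add_comm (harmonic (a - d) : ℝ)]

theorem cornerArea_zero (d : ℕ) : cornerArea d 0 0 = 0 := by
  simp [cornerArea, sq]

theorem cornerArea_self {n : ℕ} (h : d + 1 ≤ n) : cornerArea d n n = (d + 1) ^ 2 := by
  rcases h.eq_or_lt with rfl | h
  · simp [cornerArea]
  · simp [cornerArea, h.not_ge]

theorem cornerArea_pred_sub {a : ℕ} (b : ℕ) (ha : 1 ≤ a) :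
    cornerArea d (a - 1) b - cornerArea d a b =
      if a ≤ d + 1 ∨ b ≤ d + 1 then (b : ℝ) - (d + 1) else 0 := by
  obtain ⟨a, rfl⟩ := Nat.exists_eq_add_of_le' ha
  simp only [cornerArea, Nat.add_sub_cancel, Nat.cast_add, Nat.cast_one]
  by_cases hab : a + 1 ≤ d + 1 ∨ b ≤ d + 1
  · rw [if_pos hab, if_pos (by omega), if_pos hab]
    ring
  · rw [if_neg hab, if_neg hab]
    by_cases had : a = d + 1
    · rw [if_pos (Or.inl had.le), had]
      push_cast
      ring
    · rw [if_neg (by omega)]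
      ring

theorem sub_le_countPotential_pred_sub {a b c fu : ℕ} (ha : 1 ≤ a) (hfu : fu ≤ k)
    (hb : b ≤ fu + d) (hc : c < fu) (hca : (c : ℤ) * (a - d) < fu) :
    (c : ℝ) - (fu + d - b) ≤ countPotential k d (a - 1) b - countPotential k d a b := by
  have hk : (1 : ℝ) ≤ k := by exact_mod_cast (show 1 ≤ k by omega)
  have hbR : (b : ℝ) ≤ fu + d := by exact_mod_cast hb
  have hcR : (c : ℝ) + 1 ≤ fu := by exact_mod_cast hc
  have hΔ : countPotential k d (a - 1) b - countPotential k d a b =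
      (cornerArea d (a - 1) b - cornerArea d a b) +
        (k - 1) * ((harmonic (a - d) : ℝ) - harmonic (a - 1 - d)) := by
    unfold countPotential
    ring
  rw [hΔ, cornerArea_pred_sub b ha]
  split_ifs with hab
  · linarith [mul_nonneg (sub_nonneg.2 hk) (harmonic_sub_pred_nonneg d a)]
  · rw [harmonic_sub_pred_of_lt (by omega), ← div_eq_mul_inv]
    have had : (0 : ℝ) < a - d := by
      rw [sub_pos]
      exact_mod_cast (show d < a by omega)
    have hcaR : (c : ℝ) * (a - d) ≤ k - 1 := by
      have : (c : ℤ) * (a - d) ≤ k - 1 := by linarith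
      exact_mod_cast this
    have hcle : (c : ℝ) ≤ (k - 1) / (a - d) := by rwa [le_div_iff₀ had]
    linarith

end Counting

section CompleteBipartite

variable {α β : Type*} {k d : ℕ} {S W : Finset (α ⊕ β)} {f : α ⊕ β → ℕ} {u : α ⊕ β}

theorem card_filter_not_adj_inl (S : Finset (α ⊕ β)) (x : α) :
    #{v ∈ S | ¬(completeBipartiteGraph α β).Adj (.inl x) v} = #S.toLeft := by
  rw [← card_map (Function.Embedding.inl (β := β)) (s := S.toLeft)]
  congr 1
  ext (v | v) <;> simp

theorem card_filter_not_adj_inr (S : Finset (α ⊕ β)) (y : β) :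
    #{v ∈ S | ¬(completeBipartiteGraph α β).Adj (.inr y) v} = #S.toRight := by
  rw [← card_map (Function.Embedding.inr (α := α)) (s := S.toRight)]
  congr 1
  ext (v | v) <;> simp

theorem degIn_inl (S : Finset (α ⊕ β)) (x : α) :
    degIn (completeBipartiteGraph α β) S (.inl x) = #S.toRight := by
  rw [degIn, ← card_map (Function.Embedding.inr (α := α)) (s := S.toRight)]
  congr 1
  ext (v | v) <;> simp

theorem degIn_inr (S : Finset (α ⊕ β)) (y : β) :
    degIn (completeBipartiteGraph α β) S (.inr y) = #S.toLeft := by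
  rw [degIn, ← card_map (Function.Embedding.inl (β := β)) (s := S.toLeft)]
  congr 1
  ext (v | v) <;> simp

theorem degIn_of_adj {w : α ⊕ β} (h : (completeBipartiteGraph α β).Adj u w) :
    degIn (completeBipartiteGraph α β) S w = #{v ∈ S | ¬(completeBipartiteGraph α β).Adj u v} :=
  congrArg card (filter_congr fun v _ => completeBipartiteGraph_adj_iff_not_adj h v)

def potential (k d : ℕ) (S : Finset (α ⊕ β)) (f : α ⊕ β → ℕ) : ℝ :=
  countPotential k d #S.toLeft #S.toRight - ∑ v ∈ S, slack (completeBipartiteGraph α β) d S f v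

theorem potential_eq (u : α ⊕ β) :
    potential k d S f =
      countPotential k d #{v ∈ S | ¬(completeBipartiteGraph α β).Adj u v}
        (degIn (completeBipartiteGraph α β) S u) -
      ∑ v ∈ S, slack (completeBipartiteGraph α β) d S f v := by
  rcases u with x | y
  · rw [card_filter_not_adj_inl, degIn_inl, potential]
  · rw [card_filter_not_adj_inr, degIn_inr, potential, countPotential_comm]

variable [DecidableEq α] [DecidableEq β]

theorem card_saved_lt (hinv : Invariant (completeBipartiteGraph α β) k d S f)
    (hW : ∀ w ∈ W, w ∈ S.erase u ∧ (completeBipartiteGraph α β).Adj u w)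
    (hlegal : ∑ w ∈ W, f w < f u)
    (hpos : ∀ v ∈ S.erase u, 1 ≤ delSave (completeBipartiteGraph α β) u W f v) :
    #W < f u ∧
      (#W : ℤ) * (#{v ∈ S | ¬(completeBipartiteGraph α β).Adj u v} - d) < f u := by
  have hWf : ∀ w ∈ W, 1 ≤ (f w : ℤ) ∧
      (#{v ∈ S | ¬(completeBipartiteGraph α β).Adj u v} : ℤ) - d ≤ f w := by
    intro w hw
    obtain ⟨hwS, huw⟩ := hW w hw
    have h₁ := hpos w hwS
    have h₂ := (hinv w (mem_of_mem_erase hwS)).2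
    simp only [delSave, hw, not_true_eq_false, and_false, if_false] at h₁
    rw [slack, degIn_of_adj huw] at h₂
    exact ⟨by exact_mod_cast h₁, by linarith⟩
  have hlegal' : ∑ w ∈ W, (f w : ℤ) < f u := by exact_mod_cast hlegal
  have h₁ := card_nsmul_le_sum W (fun w => (f w : ℤ)) _ fun w hw => (hWf w hw).1
  have h₂ := card_nsmul_le_sum W (fun w => (f w : ℤ)) _ fun w hw => (hWf w hw).2
  rw [nsmul_eq_mul] at h₁ h₂
  exact ⟨by linarith, by linarith⟩

theorem potential_le_potential_delSave
    (hinv : Invariant (completeBipartiteGraph α β) k d S f) (hu : u ∈ S)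
    (hW : ∀ w ∈ W, w ∈ S.erase u ∧ (completeBipartiteGraph α β).Adj u w)
    (hlegal : ∑ w ∈ W, f w < f u)
    (hpos : ∀ v ∈ S.erase u, 1 ≤ delSave (completeBipartiteGraph α β) u W f v) :
    potential k d S f ≤ potential k d (S.erase u) (delSave (completeBipartiteGraph α β) u W f) := by
  set K := completeBipartiteGraph α β
  have huu : ¬K.Adj u u := K.irrefl
  have ha : #{v ∈ S.erase u | ¬K.Adj u v} = #{v ∈ S | ¬K.Adj u v} - 1 := by
    rw [filter_erase, card_erase_of_mem (mem_filter.2 ⟨hu, huu⟩)]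
  have ha₁ : 1 ≤ #{v ∈ S | ¬K.Adj u v} := card_pos.2 ⟨u, mem_filter.2 ⟨hu, huu⟩⟩
  have hb : degIn K (S.erase u) u = degIn K S u := by
    simpa [huu] using degIn_erase_add (G := K) hu u
  obtain ⟨hc, hca⟩ := card_saved_lt hinv hW hlegal hpos
  obtain ⟨hfu, hslack⟩ := hinv u hu
  have hbfu : degIn K S u ≤ f u + d := by
    rw [slack] at hslack
    omega
  have key := sub_le_countPotential_pred_sub ha₁ hfu hbfu hc hca
  rw [potential_eq u, potential_eq u, ha, hb, sum_slack_delSave hu hW hpos, slack]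
  push_cast
  linarith

theorem potential_nonpos (h : Removable (completeBipartiteGraph α β) S f)
    (hinv : Invariant (completeBipartiteGraph α β) k d S f) : potential k d S f ≤ 0 := by
  induction h with
  | empty f =>
    have hl : #(∅ : Finset (α ⊕ β)).toLeft = 0 := Nat.le_zero.1 card_toLeft_le
    have hr : #(∅ : Finset (α ⊕ β)).toRight = 0 := Nat.le_zero.1 card_toRight_le
    simp [potential, countPotential, hl, hr, cornerArea_zero]
  | step S f u W hu hW hlegal hpos _ ih =>
    exact (potential_le_potential_delSave hinv hu hW hlegal hpos).trans
      (ih (hinv.delSave hu (fun w hw => (hW w hw).2) hpos))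

theorem sq_add_one_le_harmonic (hk : 1 ≤ k)
    (h : Removable (completeBipartiteGraph (Fin (k + d)) (Fin (k + d))) univ (fun _ => k)) :
    ((d : ℝ) + 1) ^ 2 ≤ 2 * (k - 1) * (harmonic k : ℝ) := by
  have hslack (v : Fin (k + d) ⊕ Fin (k + d)) :
      slack (completeBipartiteGraph _ _) d univ (fun _ => k) v = 0 := by
    rcases v with x | y <;> simp [slack, degIn_inl, degIn_inr]
  have hinv : Invariant (completeBipartiteGraph _ _) k d univ (fun _ => k) :=
    fun v _ => ⟨le_rfl, (hslack v).ge⟩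
  have := potential_nonpos h hinv
  rw [potential, sum_eq_zero fun v _ => hslack v, countPotential, toLeft_univ, toRight_univ,
    card_univ, Fintype.card_fin, cornerArea_self (by omega), Nat.add_sub_cancel] at this
  push_cast at this
  linarith

end CompleteBipartite

end Removable

end

/-- For `n ≥ 1`, if the complete bipartite graph `K_{n,n}` is
`k`-removable, then `k > n - √(2n(log n + 1))`. -/
theorem statement9 (n k : ℕ) (hn : 1 ≤ n)
    (h : Removable (completeBipartiteGraph (Fin n) (Fin n))
      Finset.univ (fun _ => k)) :
    (n : ℝ) - Real.sqrt (2 * n * (Real.log n + 1)) < k := by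
  rcases lt_or_ge n k with hnk | hkn
  · have : (n : ℝ) < k := by exact_mod_cast hnk
    linarith [Real.sqrt_nonneg (2 * n * (Real.log n + 1))]
  obtain ⟨-, -, hk⟩ := h.exists_pos ⟨.inl ⟨0, hn⟩, Finset.mem_univ _⟩
  obtain ⟨d, rfl⟩ := Nat.exists_eq_add_of_le hkn
  have hk₁ : (1 : ℝ) ≤ k := by exact_mod_cast hk
  have hd₀ : (0 : ℝ) ≤ d := d.cast_nonneg
  have hd : (d : ℝ) ^ 2 < 2 * (k + d) * (Real.log (k + d) + 1) :=
    calc (d : ℝ) ^ 2 < (d + 1) ^ 2 := by nlinarith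
      _ ≤ 2 * (k - 1) * (harmonic k : ℝ) := h.sq_add_one_le_harmonic hk
      _ ≤ 2 * (k - 1) * (1 + Real.log k) := by
        gcongr
        exact harmonic_le_one_add_log k
      _ ≤ 2 * (k + d) * (1 + Real.log (k + d)) := by
        gcongr
        · linarith [Real.log_nonneg hk₁]
        · linarith
      _ = 2 * (k + d) * (Real.log (k + d) + 1) := by ring
  have := (Real.lt_sqrt (by positivity)).2 hd
  push_cast
  linarith
end

section
/- For every graph G and positive-valued function f : V(G) → ℕ, if G is f-removable then (G, f) is strict type 3 degenerate. -/
open scoped Classical in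
/-- Strict type 3 degeneracy of a pair `(G, f)`: an edgeless graph with positive-valued `f`
is strict type 3 degenerate, and otherwise one may apply `ReduceValue` at a vertex
(decrease `f v` by one) or `EdgeDelete` at an edge `vw` (delete the edge and decrease
`f v` by `f w`). -/
inductive SD3 {V : Type*} : SimpleGraph V → (V → ℕ) → Prop
  | base (G : SimpleGraph V) (f : V → ℕ) (h : ∀ v w, ¬ G.Adj v w) (hpos : ∀ v, 1 ≤ f v) :
      SD3 G f
  | reduce (G : SimpleGraph V) (f : V → ℕ) (v : V)
      (h : SD3 G (Function.update f v (f v - 1))) : SD3 G f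
  | edgeDel (G : SimpleGraph V) (f : V → ℕ) (v w : V) (hvw : G.Adj v w)
      (h : SD3 (G.deleteEdges {s(v, w)}) (Function.update f v (f v - f w))) : SD3 G f

section Helpers

variable {V : Type*}

lemma sd3_congr {H : SimpleGraph V} {f f' : V → ℕ} (h : SD3 H f) (e : ∀ v, f v = f' v) :
    SD3 H f' := by
  have : f = f' := funext e
  rwa [this] at h

open scoped Classical in
lemma sd3_reduce_to (H : SimpleGraph V) (u : V) :
    ∀ (k : ℕ) (f : V → ℕ) (m : ℕ), f u = m + k →
      SD3 H (Function.update f u m) → SD3 H f := by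
  intro k
  induction k with
  | zero =>
    intro f m hm h
    refine sd3_congr h fun v => ?_
    rcases eq_or_ne v u with rfl | hv
    · simp [Function.update_self]; omega
    · simp [Function.update_of_ne hv]
  | succ k ih =>
    intro f m hm h
    refine SD3.reduce H f u ?_
    refine ih (Function.update f u (f u - 1)) m ?_ ?_
    · simp only [Function.update_self]; omega
    · refine sd3_congr h fun v => ?_
      rcases eq_or_ne v u with rfl | hv
      · simp
      · simp [Function.update_of_ne hv]

open scoped Classical in
/-- Delete the edges from `u` to each `w ∈ W`, paying `∑ f w` from `f u`. -/
lemma sd3_delSaved (u : V) :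
    ∀ (W : Finset V) (H : SimpleGraph V) (f : V → ℕ),
      (∀ w ∈ W, H.Adj u w) →
      SD3 (H.deleteEdges {e | ∃ w ∈ W, e = s(u, w)})
        (Function.update f u (f u - ∑ w ∈ W, f w)) →
      SD3 H f := by
  intro W
  induction W using Finset.induction_on with
  | empty =>
    intro H f _ h
    have hg : H.deleteEdges {e | ∃ w ∈ (∅ : Finset V), e = s(u, w)} = H := by
      have : {e | ∃ w ∈ (∅ : Finset V), e = s(u, w)} = (∅ : Set (Sym2 V)) := by
        ext e; simp
      rw [this, SimpleGraph.deleteEdges_empty]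
    rw [hg] at h
    refine sd3_congr h fun v => ?_
    rcases eq_or_ne v u with rfl | hv
    · simp
    · simp [Function.update_of_ne hv]
  | @insert a W' ha ih =>
    intro H f hadj h
    refine SD3.edgeDel H f u a (hadj a (Finset.mem_insert_self a W')) ?_
    refine ih (H.deleteEdges {s(u, a)}) (Function.update f u (f u - f a)) ?_ ?_
    · intro w hw
      have h1 : H.Adj u w := hadj w (Finset.mem_insert_of_mem hw)
      rw [SimpleGraph.deleteEdges_adj]
      refine ⟨h1, ?_⟩
      intro he
      rw [Set.mem_singleton_iff, Sym2.eq_iff] at he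
      rcases he with ⟨-, rfl⟩ | ⟨rfl, rfl⟩
      · exact ha hw
      · exact h1.ne rfl
    · rw [SimpleGraph.deleteEdges_deleteEdges]
      have hg : ({s(u, a)} ∪ {e | ∃ w ∈ W', e = s(u, w)} : Set (Sym2 V))
          = {e | ∃ w ∈ insert a W', e = s(u, w)} := by
        ext e
        simp only [Set.mem_union, Set.mem_singleton_iff, Set.mem_setOf_eq,
          Finset.mem_insert]
        constructor
        · rintro (rfl | ⟨w, hw, rfl⟩)
          · exact ⟨a, Or.inl rfl, rfl⟩
          · exact ⟨w, Or.inr hw, rfl⟩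
        · rintro ⟨w, (rfl | hw), rfl⟩
          · exact Or.inl rfl
          · exact Or.inr ⟨w, hw, rfl⟩
      rw [hg]
      refine sd3_congr h fun v => ?_
      have hsum : ∑ w ∈ W', (Function.update f u (f u - f a)) w = ∑ w ∈ W', f w := by
        refine Finset.sum_congr rfl fun w hw => ?_
        have : w ≠ u := fun e => (hadj w (Finset.mem_insert_of_mem hw)).ne e.symm
        simp [Function.update_of_ne this]
      rcases eq_or_ne v u with rfl | hv
      · simp only [Function.update_self, hsum, Finset.sum_insert ha]
        omega
      · simp [Function.update_of_ne hv]

open scoped Classical in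
/-- With `f u = 1`, delete the edges from each `v ∈ U` to `u`, decrementing `f v`. -/
lemma sd3_delUnsaved (u : V) :
    ∀ (U : Finset V) (H : SimpleGraph V) (f : V → ℕ),
      u ∉ U → f u = 1 →
      (∀ v ∈ U, H.Adj v u) →
      SD3 (H.deleteEdges {e | ∃ v ∈ U, e = s(v, u)})
        (fun v => if v ∈ U then f v - 1 else f v) →
      SD3 H f := by
  intro U
  induction U using Finset.induction_on with
  | empty =>
    intro H f _ _ _ h
    have hg : H.deleteEdges {e | ∃ v ∈ (∅ : Finset V), e = s(v, u)} = H := by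
      have : {e | ∃ v ∈ (∅ : Finset V), e = s(v, u)} = (∅ : Set (Sym2 V)) := by
        ext e; simp
      rw [this, SimpleGraph.deleteEdges_empty]
    rw [hg] at h
    exact sd3_congr h fun v => by simp
  | @insert a U' ha ih =>
    intro H f huU hfu hadj h
    refine SD3.edgeDel H f a u (hadj a (Finset.mem_insert_self a U')) ?_
    have hau : a ≠ u := fun e => huU (e ▸ Finset.mem_insert_self a U')
    refine ih (H.deleteEdges {s(a, u)}) (Function.update f a (f a - f u))
        (fun hmem => huU (Finset.mem_insert_of_mem hmem))
        (by rw [Function.update_of_ne (Ne.symm hau)]; exact hfu) ?_ ?_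
    · intro v hv
      have h1 : H.Adj v u := hadj v (Finset.mem_insert_of_mem hv)
      rw [SimpleGraph.deleteEdges_adj]
      refine ⟨h1, ?_⟩
      intro he
      rw [Set.mem_singleton_iff, Sym2.eq_iff] at he
      rcases he with ⟨rfl, -⟩ | ⟨rfl, -⟩
      · exact ha hv
      · exact huU (Finset.mem_insert_of_mem hv)
    · rw [SimpleGraph.deleteEdges_deleteEdges]
      have hg : ({s(a, u)} ∪ {e | ∃ v ∈ U', e = s(v, u)} : Set (Sym2 V))
          = {e | ∃ v ∈ insert a U', e = s(v, u)} := by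
        ext e
        simp only [Set.mem_union, Set.mem_singleton_iff, Set.mem_setOf_eq,
          Finset.mem_insert]
        constructor
        · rintro (rfl | ⟨v, hv, rfl⟩)
          · exact ⟨a, Or.inl rfl, rfl⟩
          · exact ⟨v, Or.inr hv, rfl⟩
        · rintro ⟨v, (rfl | hv), rfl⟩
          · exact Or.inl rfl
          · exact Or.inr ⟨v, hv, rfl⟩
      rw [hg]
      refine sd3_congr h fun v => ?_
      rcases eq_or_ne v a with rfl | hv
      · have : v ∉ U' := ha
        simp [this, hfu]
      · by_cases hvU : v ∈ U' <;>
          simp [Function.update_of_ne hv, hvU, hv]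

end Helpers

open scoped Classical in
lemma removable_sd3 {V : Type*} [DecidableEq V] {G : SimpleGraph V} {S : Finset V} {g : V → ℕ}
    (h : Removable G S g) :
    ∀ (H : SimpleGraph V) (f : V → ℕ),
      (∀ v ∈ S, f v = g v) → (∀ v, 1 ≤ f v) →
      (∀ a b, H.Adj a b → a ∈ S ∧ b ∈ S) →
      (∀ a b, a ∈ S → b ∈ S → (H.Adj a b ↔ G.Adj a b)) →
      SD3 H f := by
  induction h with
  | empty g =>
    intro H f _ hf1 hHS _
    exact SD3.base H f (fun a b hab => absurd ((hHS a b hab).1) (Finset.notMem_empty a)) hf1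
  | step S g u W hu hW hlegal hposg hrec IH =>
    intro H f hfg hf1 hHS hHG
    have hfu : f u = g u := hfg u hu
    have hWS : ∀ w ∈ W, w ∈ S := fun w hw => Finset.mem_of_mem_erase (hW w hw).1
    have hWne : ∀ w ∈ W, w ≠ u := fun w hw => Finset.ne_of_mem_erase (hW w hw).1
    have hsum : ∑ w ∈ W, f w = ∑ w ∈ W, g w :=
      Finset.sum_congr rfl fun w hw => hfg w (hWS w hw)
    have hlt : ∑ w ∈ W, f w < f u := by rw [hsum, hfu]; exact hlegal
    -- Step 1: delete the saved edges u–w, w ∈ W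
    refine sd3_delSaved u W H f (fun w hw => (hHG u w hu (hWS w hw)).2 (hW w hw).2) ?_
    set H1 := H.deleteEdges {e | ∃ w ∈ W, e = s(u, w)} with hH1
    -- Step 2: reduce the value at u down to 1
    refine sd3_reduce_to H1 u (f u - ∑ w ∈ W, f w - 1) _ 1
        (by simp only [Function.update_self]; omega) ?_
    -- Step 3: delete the unsaved edges v–u, decrementing each f v by f u = 1
    set U : Finset V := (S.erase u).filter (fun v => G.Adj u v ∧ v ∉ W) with hU
    have hUmem : ∀ v, v ∈ U ↔ v ∈ S.erase u ∧ G.Adj u v ∧ v ∉ W := by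
      intro v; simp [hU, Finset.mem_filter]
    have huU : u ∉ U := fun hmem => (Finset.notMem_erase u S) ((hUmem u).1 hmem).1
    refine sd3_delUnsaved u U H1 _ huU (by simp) ?_ ?_
    · intro v hv
      obtain ⟨hvS, hadj, hvW⟩ := (hUmem v).1 hv
      have hvne : v ≠ u := Finset.ne_of_mem_erase hvS
      have hH : H.Adj v u := ((hHG v u (Finset.mem_of_mem_erase hvS) hu).2 hadj.symm)
      rw [hH1, SimpleGraph.deleteEdges_adj]
      refine ⟨hH, ?_⟩
      intro he
      rw [Set.mem_setOf_eq] at he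
      obtain ⟨w, hw, he⟩ := he
      rw [Sym2.eq_iff] at he
      rcases he with ⟨rfl, -⟩ | ⟨rfl, -⟩
      · exact hvne rfl
      · exact hvW hw
    · -- Step 4: apply the induction hypothesis
      refine IH _ _ ?_ ?_ ?_ ?_
      · -- agrees with the recursive g on S.erase u
        intro v hv
        have hvne : v ≠ u := Finset.ne_of_mem_erase hv
        have hfv : f v = g v := hfg v (Finset.mem_of_mem_erase hv)
        by_cases hc : G.Adj u v ∧ v ∉ W
        · have hvU : v ∈ U := (hUmem v).2 ⟨hv, hc⟩
          simp [hvU, Function.update_apply, hvne, hfv, hc]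
        · have hvU : v ∉ U := fun hmem => hc ((hUmem v).1 hmem).2
          simp [hvU, Function.update_apply, hvne, hfv, hc]
      · -- positivity
        intro v
        by_cases hvU : v ∈ U
        · obtain ⟨hvS, hc⟩ := (hUmem v).1 hvU
          have hvne : v ≠ u := Finset.ne_of_mem_erase hvS
          have := hposg v hvS
          rw [if_pos hc] at this
          have hfv : f v = g v := hfg v (Finset.mem_of_mem_erase hvS)
          simp only [hvU, if_true, Function.update_apply, if_neg hvne]
          omega
        · rcases eq_or_ne v u with rfl | hvne
          · simp [hvU]
          · simp only [hvU, if_false, Function.update_apply, if_neg hvne]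
            exact hf1 v
      · -- edges lie inside S.erase u
        intro a b hab
        have hab1 : H1.Adj a b := (SimpleGraph.deleteEdges_le _) hab
        have habH : H.Adj a b := (SimpleGraph.deleteEdges_le _) hab1
        obtain ⟨haS, hbS⟩ := hHS a b habH
        have key : ∀ c d, H.Adj c d → c ∈ S → d ∈ S →
            (H1.deleteEdges {e | ∃ v ∈ U, e = s(v, u)}).Adj c d → c ≠ u := by
          intro c d hcd hcS hdS hcd2 hc
          subst hc
          have hdne : d ≠ c := hcd.ne'
          have hGd : G.Adj c d := (hHG c d hcS hdS).1 hcd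
          by_cases hdW : d ∈ W
          · have h1 : H1.Adj c d := (SimpleGraph.deleteEdges_le _) hcd2
            rw [hH1, SimpleGraph.deleteEdges_adj] at h1
            exact h1.2 ⟨d, hdW, rfl⟩
          · have hdU : d ∈ U := (hUmem d).2 ⟨Finset.mem_erase.2 ⟨hdne, hdS⟩, hGd, hdW⟩
            rw [SimpleGraph.deleteEdges_adj] at hcd2
            exact hcd2.2 ⟨d, hdU, Sym2.eq_swap⟩
        have hane : a ≠ u := key a b habH haS hbS hab
        have hbne : b ≠ u := key b a habH.symm hbS haS hab.symm
        exact ⟨Finset.mem_erase.2 ⟨hane, haS⟩, Finset.mem_erase.2 ⟨hbne, hbS⟩⟩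
      · -- agreement with G on S.erase u
        intro a b haS hbS
        have hane : a ≠ u := Finset.ne_of_mem_erase haS
        have hbne : b ≠ u := Finset.ne_of_mem_erase hbS
        have haS' : a ∈ S := Finset.mem_of_mem_erase haS
        have hbS' : b ∈ S := Finset.mem_of_mem_erase hbS
        constructor
        · intro hab
          exact (hHG a b haS' hbS').1 ((SimpleGraph.deleteEdges_le _)
            ((SimpleGraph.deleteEdges_le _) hab))
        · intro hab
          have hH : H.Adj a b := (hHG a b haS' hbS').2 hab
          rw [SimpleGraph.deleteEdges_adj, hH1, SimpleGraph.deleteEdges_adj]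
          refine ⟨⟨hH, ?_⟩, ?_⟩
          · rintro ⟨w, hw, he⟩
            rw [Sym2.eq_iff] at he
            rcases he with ⟨rfl, rfl⟩ | ⟨rfl, rfl⟩
            · exact hane rfl
            · exact hbne rfl
          · rintro ⟨v, hv, he⟩
            rw [Sym2.eq_iff] at he
            rcases he with ⟨rfl, rfl⟩ | ⟨rfl, rfl⟩
            · exact hbne rfl
            · exact hane rfl


/-- If `G` is `f`-removable for a positive-valued `f`, then `(G, f)` is
strict type 3 degenerate. -/
theorem statement13 {V : Type*} [Fintype V] [DecidableEq V] (G : SimpleGraph V) (f : V → ℕ)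
    (hpos : ∀ v, 1 ≤ f v) (h : Removable G Finset.univ f) : SD3 G f := by
  exact removable_sd3 h G f (fun v _ => rfl) hpos
    (fun a b _ => ⟨Finset.mem_univ a, Finset.mem_univ b⟩)
    (fun a b _ _ => Iff.rfl)
end

section
/- Let G be a graph with χ(G) ≤ r and Δ(G) ≤ d, where r ≥ 2. Then χ_P(G) ≤ (1 − 1/(4r+1))·d + 2. -/
open scoped Classical in
/-- `PaintN G n U f`: Painter can win the painting game within `n` turns, where `U` is the
set of uncolored vertices and `f v` is the number of tokens at `v`. On each turn Lister
picks a nonempty `S ⊆ U` (removing one token from each vertex of `S`) and Painter colors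
an independent subset `I ⊆ S`; Painter loses if an uncolored vertex runs out of tokens. -/
def PaintN {V : Type*} (G : SimpleGraph V) : ℕ → Finset V → (V → ℕ) → Prop
  | 0, U, _ => U = ∅
  | n + 1, U, f => U = ∅ ∨
      ((∀ v ∈ U, 1 ≤ f v) ∧
        ∀ S ⊆ U, S.Nonempty → ∃ I ⊆ S,
          (∀ a ∈ I, ∀ b ∈ I, ¬ G.Adj a b) ∧
          PaintN G n (U \ I) (fun v => if v ∈ S then f v - 1 else f v))

/-- Painter has a winning strategy in the painting game (the game necessarily ends after
finitely many turns, since each turn removes at least one token). -/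
def Paint {V : Type*} (G : SimpleGraph V) (U : Finset V) (f : V → ℕ) : Prop :=
  ∃ n : ℕ, PaintN G n U f

/-- The paintability `χ_P(G)`: the least `k` such that Painter wins the `k`-painting game. -/
noncomputable def chiP {V : Type*} [Fintype V] (G : SimpleGraph V) : ℕ :=
  sInf {k : ℕ | Paint G Finset.univ (fun _ => k)}

namespace St18

open Finset

theorem kernel_exists {V : Type*} (A : V → V → Prop) (L : V → ℕ) (sg : V → Bool)
    (hg : ∀ u v, A u v → L u < L v ∨ (L u = L v ∧ sg u ≠ sg v)) :
    ∀ (n : ℕ) (S : Finset V), S.card ≤ n →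
      ∃ I ⊆ S, (∀ a ∈ I, ∀ b ∈ I, ¬ A a b) ∧ (∀ v ∈ S, v ∉ I → ∃ u ∈ I, A v u) := by
  classical
  have hirr : ∀ u, ¬ A u u := by
    intro u h
    rcases hg u u h with h' | ⟨_, h'⟩
    · exact lt_irrefl _ h'
    · exact h' rfl
  intro n
  induction n with
  | zero =>
    intro S hS
    have : S = ∅ := Finset.card_eq_zero.mp (Nat.le_zero.mp hS)
    subst this
    exact ⟨∅, Finset.Subset.refl _, by simp, by simp⟩
  | succ n ih =>
    intro S hS
    rcases S.eq_empty_or_nonempty with rfl | hne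
    · exact ⟨∅, Finset.Subset.refl _, by simp, by simp⟩
    set AS : V → V → Prop := fun u v => A u v ∧ u ∈ S ∧ v ∈ S with hASdef
    set RS : V → Finset V := fun v => S.filter (fun w => Relation.ReflTransGen AS v w) with hRSdef
    obtain ⟨v₀, hv₀S, hmin⟩ := S.exists_min_image (fun v => (RS v).card) hne
    have hmemRS : ∀ v w, w ∈ RS v ↔ w ∈ S ∧ Relation.ReflTransGen AS v w := by
      intro v w; simp [hRSdef]
    set C := RS v₀ with hCdef
    have hv₀C : v₀ ∈ C := (hmemRS _ _).mpr ⟨hv₀S, Relation.ReflTransGen.refl⟩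
    have hCS : C ⊆ S := Finset.filter_subset _ _
    have hclosed : ∀ u ∈ C, ∀ w, AS u w → w ∈ C := by
      intro u hu w hw
      rw [hmemRS] at hu ⊢
      exact ⟨hw.2.2, hu.2.tail hw⟩
    have hclosedR : ∀ u ∈ C, ∀ w, Relation.ReflTransGen AS u w → w ∈ C := by
      intro u hu w hw
      induction hw with
      | refl => exact hu
      | tail hab hbc ihh => exact hclosed _ ihh _ hbc
    have hstrong : ∀ u ∈ C, RS u = C := by
      intro u hu
      have hsub : RS u ⊆ C := by
        intro w hw; rw [hmemRS] at hw; exact hclosedR u hu w hw.2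
      exact Finset.eq_of_subset_of_card_le hsub (hmin u (hCS hu))
    have hreach : ∀ u ∈ C, ∀ w ∈ C, Relation.ReflTransGen AS u w := by
      intro u hu w hw
      rw [← hstrong u hu, hmemRS] at hw; exact hw.2
    have hLmono : ∀ a b, Relation.ReflTransGen AS a b → L a ≤ L b := by
      intro a b h
      induction h with
      | refl => exact le_refl _
      | tail hab hbc ihh =>
        refine le_trans ihh ?_
        rcases hg _ _ hbc.1 with h' | ⟨h', _⟩
        · exact le_of_lt h'
        · exact le_of_eq h'
    have hLC : ∀ u ∈ C, L u = L v₀ :=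
      fun u hu => le_antisymm (hLmono u v₀ (hreach u hu v₀ hv₀C)) (hLmono v₀ u (hreach v₀ hv₀C u hu))
    have hflip : ∀ u ∈ C, ∀ w ∈ C, A u w → sg u ≠ sg w := by
      intro u hu w hw h
      rcases hg u w h with h' | ⟨_, h'⟩
      · exfalso; rw [hLC u hu, hLC w hw] at h'; exact lt_irrefl _ h'
      · exact h'
    have hKC : ∃ KC ⊆ C, (∀ a ∈ KC, ∀ b ∈ KC, ¬ A a b) ∧ (∀ v ∈ C, v ∉ KC → ∃ w ∈ KC, A v w) := by
      by_cases hC2 : 2 ≤ C.card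
      · refine ⟨C.filter (fun u => sg u = false), Finset.filter_subset _ _, ?_, ?_⟩
        · intro a ha b hb hab
          rw [Finset.mem_filter] at ha hb
          exact hflip a ha.1 b hb.1 hab (by rw [ha.2, hb.2])
        · intro v hv hvn
          have hsgv : sg v = true := by
            rw [Finset.mem_filter] at hvn
            cases h : sg v
            · exact absurd ⟨hv, h⟩ hvn
            · rfl
          obtain ⟨w, hwC, hwne⟩ := Finset.exists_mem_ne (s := C) (by omega) v
          have hr := hreach v hv w hwC
          rcases Relation.ReflTransGen.cases_head hr with heq | ⟨x, hx1, _⟩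
          · exact absurd heq.symm hwne
          · have hxC : x ∈ C := hclosed v hv x hx1
            have hne := hflip v hv x hxC hx1.1
            refine ⟨x, Finset.mem_filter.mpr ⟨hxC, ?_⟩, hx1.1⟩
            cases h : sg x
            · rfl
            · rw [hsgv, h] at hne; exact absurd rfl hne
      · refine ⟨C, Finset.Subset.refl _, ?_, ?_⟩
        · have h1 : C.card = 1 := le_antisymm (by omega) (Finset.card_pos.mpr ⟨v₀, hv₀C⟩)
          obtain ⟨a, ha⟩ := Finset.card_eq_one.mp h1
          intro x hx y hy hxy
          rw [ha, Finset.mem_singleton] at hx hy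
          subst hx; subst hy
          exact hirr _ hxy
        · intro v hv hvn; exact absurd hv hvn
    obtain ⟨KC, hKCC, hKCind, hKCcov⟩ := hKC
    set D := S.filter (fun v => v ∉ C ∧ ∀ w ∈ KC, ¬ A v w) with hDdef
    have hDcard : D.card ≤ n := by
      have hsub : D ⊆ S.erase v₀ := by
        intro w hw
        rw [hDdef, Finset.mem_filter] at hw
        exact Finset.mem_erase.mpr ⟨fun h => hw.2.1 (h ▸ hv₀C), hw.1⟩
      calc D.card ≤ (S.erase v₀).card := Finset.card_le_card hsub
        _ = S.card - 1 := Finset.card_erase_of_mem hv₀S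
        _ ≤ n := by omega
    obtain ⟨I', hI'D, hI'ind, hI'cov⟩ := ih D hDcard
    have hDS : D ⊆ S := Finset.filter_subset _ _
    refine ⟨KC ∪ I', ?_, ?_, ?_⟩
    · intro x hx
      rcases Finset.mem_union.mp hx with h | h
      exacts [hCS (hKCC h), hDS (hI'D h)]
    · intro a ha b hb hab
      rcases Finset.mem_union.mp ha with ha' | ha' <;> rcases Finset.mem_union.mp hb with hb' | hb'
      · exact hKCind a ha' b hb' hab
      · have hbD := hI'D hb'
        rw [hDdef, Finset.mem_filter] at hbD
        have : b ∈ C := hclosed a (hKCC ha') b ⟨hab, hCS (hKCC ha'), hbD.1⟩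
        exact hbD.2.1 this
      · have haD := hI'D ha'
        rw [hDdef, Finset.mem_filter] at haD
        exact haD.2.2 b hb' hab
      · exact hI'ind a ha' b hb' hab
    · intro v hv hvn
      have hv1 : v ∉ KC := fun h => hvn (Finset.mem_union_left _ h)
      have hv2 : v ∉ I' := fun h => hvn (Finset.mem_union_right _ h)
      by_cases hvC : v ∈ C
      · obtain ⟨w, hw, hA⟩ := hKCcov v hvC hv1
        exact ⟨w, Finset.mem_union_left _ hw, hA⟩
      · by_cases hvD : v ∈ D
        · obtain ⟨u, hu, hA⟩ := hI'cov v hvD hv2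
          exact ⟨u, Finset.mem_union_right _ hu, hA⟩
        · have hnot : ¬ (v ∉ C ∧ ∀ w ∈ KC, ¬ A v w) := by
            intro h; exact hvD (by rw [hDdef]; exact Finset.mem_filter.mpr ⟨hv, h⟩)
          push_neg at hnot
          obtain ⟨w, hw, hA⟩ := hnot hvC
          exact ⟨w, Finset.mem_union_left _ hw, hA⟩

theorem paintN_of_orientation {V : Type*} [Fintype V] (G : SimpleGraph V)
    (A : V → V → Prop) (L : V → ℕ) (sg : V → Bool)
    (htot : ∀ u v, G.Adj u v → A u v ∨ A v u)
    (hg : ∀ u v, A u v → L u < L v ∨ (L u = L v ∧ sg u ≠ sg v)) :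
    ∀ (N : ℕ) (U : Finset V) (f : V → ℕ),
      (∀ v ∈ U, ∀ F : Finset V, F ⊆ U → (∀ w ∈ F, A v w) → F.card + 1 ≤ f v) →
      (∑ v ∈ U, f v ≤ N) → PaintN G N U f := by
  classical
  intro N
  induction N with
  | zero =>
    intro U f hf hsum
    have hU : U = ∅ := by
      rcases U.eq_empty_or_nonempty with h | ⟨v, hv⟩
      · exact h
      · exfalso
        have h1 : 1 ≤ f v := by
          have := hf v hv ∅ (Finset.empty_subset _) (by simp)
          simpa using this
        have h2 : f v ≤ ∑ v ∈ U, f v := Finset.single_le_sum (fun i _ => Nat.zero_le _) hv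
        omega
    subst hU
    simp only [PaintN]
  | succ N ih =>
    intro U f hf hsum
    simp only [PaintN]
    rcases U.eq_empty_or_nonempty with rfl | hUne
    · exact Or.inl rfl
    refine Or.inr ⟨?_, ?_⟩
    · intro v hv
      have := hf v hv ∅ (Finset.empty_subset _) (by simp)
      simpa using this
    intro S hSU hSne
    obtain ⟨I, hIS, hIind, hIcov⟩ := kernel_exists A L sg hg S.card S le_rfl
    have hIU : I ⊆ U := hIS.trans hSU
    refine ⟨I, hIS, ?_, ?_⟩
    · intro a ha b hb hadj
      rcases htot a b hadj with h | h
      exacts [hIind a ha b hb h, hIind b hb a ha h]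
    · apply ih
      · intro v hv F hFsub hFA
        rw [Finset.mem_sdiff] at hv
        by_cases hvS : v ∈ S
        · obtain ⟨u, huI, hAvu⟩ := hIcov v hvS hv.2
          have huU : u ∈ U := hIU huI
          have hu_old : u ∈ U.filter (fun w => A v w) := Finset.mem_filter.mpr ⟨huU, hAvu⟩
          have hFsub2 : F ⊆ (U.filter (fun w => A v w)).erase u := by
            intro w hw
            have hw2 := hFsub hw
            rw [Finset.mem_sdiff] at hw2
            exact Finset.mem_erase.mpr ⟨fun h => hw2.2 (h ▸ huI),
              Finset.mem_filter.mpr ⟨hw2.1, hFA w hw⟩⟩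
          have hc1 : F.card ≤ (U.filter (fun w => A v w)).card - 1 := by
            calc F.card ≤ ((U.filter (fun w => A v w)).erase u).card := Finset.card_le_card hFsub2
              _ = (U.filter (fun w => A v w)).card - 1 := Finset.card_erase_of_mem hu_old
          have h1 : 0 < (U.filter (fun w => A v w)).card := Finset.card_pos.mpr ⟨u, hu_old⟩
          have h5 := hf v hv.1 (U.filter (fun w => A v w)) (Finset.filter_subset _ _)
            (fun w hw => (Finset.mem_filter.mp hw).2)
          simp only [if_pos hvS]
          omega
        · simp only [if_neg hvS]
          exact hf v hv.1 F (hFsub.trans Finset.sdiff_subset) hFA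
      · have hIne : I.Nonempty := by
          obtain ⟨v, hv⟩ := hSne
          by_cases hvI : v ∈ I
          · exact ⟨v, hvI⟩
          · obtain ⟨u, hu, _⟩ := hIcov v hv hvI; exact ⟨u, hu⟩
        obtain ⟨u, huI⟩ := hIne
        have hsd := Finset.sum_sdiff (f := f) hIU
        have h1 : 1 ≤ f u := by
          have := hf u (hIU huI) ∅ (Finset.empty_subset _) (by simp)
          simpa using this
        have h2 : f u ≤ ∑ v ∈ I, f v := Finset.single_le_sum (fun i _ => Nat.zero_le _) huI
        have h3 : ∑ v ∈ U \ I, (if v ∈ S then f v - 1 else f v) ≤ ∑ v ∈ U \ I, f v :=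
          Finset.sum_le_sum (fun i _ => by by_cases h : i ∈ S <;> simp [h])
        omega



open Finset

theorem core {V : Type*} (G : SimpleGraph V) [DecidableRel G.Adj] (m : ℕ) :
    ∀ (n : ℕ) (X Y : Finset V), X.card + Y.card ≤ n →
      (m - 1) * (X.card + Y.card) + 1 ≤ ∑ x ∈ X, ((Y.filter (G.Adj x ·)).card) →
      ∃ X' Y', X' ⊆ X ∧ Y' ⊆ Y ∧ X'.Nonempty ∧ Y'.Nonempty ∧
        (∀ x ∈ X', m ≤ ((Y'.filter (G.Adj x ·)).card)) ∧
        (∀ y ∈ Y', m ≤ ((X'.filter (G.Adj y ·)).card)) := by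
  classical
  intro n
  induction n with
  | zero =>
    intro X Y hcard hedge
    exfalso
    have hX : X = ∅ := card_eq_zero.mp (by omega)
    subst hX
    simp at hedge
  | succ n ih =>
    intro X Y hcard hedge
    by_cases hx : ∃ x ∈ X, (Y.filter (G.Adj x ·)).card + 1 ≤ m
    · obtain ⟨x, hxX, hxdeg⟩ := hx
      have hsum : ∑ z ∈ X.erase x, (Y.filter (G.Adj z ·)).card + (Y.filter (G.Adj x ·)).card
          = ∑ z ∈ X, (Y.filter (G.Adj z ·)).card := Finset.sum_erase_add _ _ hxX
      obtain ⟨xc, hxc⟩ : ∃ xc, X.card = xc + 1 :=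
        ⟨X.card - 1, by have := card_pos.mpr ⟨x, hxX⟩; omega⟩
      have hXcard : (X.erase x).card = xc := by rw [card_erase_of_mem hxX, hxc]; omega
      obtain ⟨X', Y', h1, h2, h3, h4, h5, h6⟩ := ih (X.erase x) Y (by omega) (by
        rw [hXcard]
        obtain ⟨q, hq⟩ : ∃ q, m = q + 1 := ⟨m - 1, by omega⟩
        have hq1 : m - 1 = q := by omega
        rw [hq1]
        rw [hq1, hxc] at hedge
        have e1 : q * (xc + 1 + Y.card) = q * (xc + Y.card) + q := by ring
        have e2 : (Y.filter (G.Adj x ·)).card ≤ q := by omega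
        linarith)
      exact ⟨X', Y', h1.trans (erase_subset _ _), h2, h3, h4, h5, h6⟩
    · by_cases hy : ∃ y ∈ Y, (X.filter (G.Adj y ·)).card + 1 ≤ m
      · obtain ⟨y, hyY, hydeg⟩ := hy
        have key : ∀ x ∈ X, ((Y.erase y).filter (G.Adj x ·)).card + (if G.Adj x y then 1 else 0)
            = (Y.filter (G.Adj x ·)).card := by
          intro x _
          rw [Finset.filter_erase]
          by_cases hadj : G.Adj x y
          · have hymem : y ∈ Y.filter (fun w => G.Adj x w) := mem_filter.mpr ⟨hyY, hadj⟩
            rw [if_pos hadj, Finset.card_erase_of_mem hymem]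
            have h1 : 0 < (Y.filter (fun w => G.Adj x w)).card := card_pos.mpr ⟨y, hymem⟩
            omega
          · rw [if_neg hadj, Finset.erase_eq_of_notMem (by simp [hadj])]
            omega
        have hsum2 : ∑ x ∈ X, ((Y.erase y).filter (G.Adj x ·)).card
              + (X.filter (fun x => G.Adj x y)).card
            = ∑ x ∈ X, (Y.filter (G.Adj x ·)).card := by
          rw [Finset.card_filter, ← Finset.sum_add_distrib]
          exact Finset.sum_congr rfl key
        have hflip : (X.filter (fun x => G.Adj x y)) = (X.filter (G.Adj y ·)) := by
          apply Finset.filter_congr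
          intro x _
          simp [G.adj_comm]
        rw [hflip] at hsum2
        obtain ⟨yc, hyc⟩ : ∃ yc, Y.card = yc + 1 :=
          ⟨Y.card - 1, by have := card_pos.mpr ⟨y, hyY⟩; omega⟩
        have hYcard : (Y.erase y).card = yc := by rw [card_erase_of_mem hyY, hyc]; omega
        obtain ⟨X', Y', h1, h2, h3, h4, h5, h6⟩ := ih X (Y.erase y) (by omega) (by
          rw [hYcard]
          obtain ⟨q, hq⟩ : ∃ q, m = q + 1 := ⟨m - 1, by omega⟩
          have hq1 : m - 1 = q := by omega
          rw [hq1]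
          rw [hq1, hyc] at hedge
          have e1 : q * (X.card + (yc + 1)) = q * (X.card + yc) + q := by ring
          have e2 : (X.filter (G.Adj y ·)).card ≤ q := by omega
          linarith)
        exact ⟨X', Y', h1, h2.trans (erase_subset _ _), h3, h4, h5, h6⟩
      · push_neg at hx hy
        have hXdeg : ∀ x ∈ X, m ≤ (Y.filter (G.Adj x ·)).card := by
          intro x hxX; have := hx x hxX; omega
        have hYdeg : ∀ y ∈ Y, m ≤ (X.filter (G.Adj y ·)).card := by
          intro y hyY; have := hy y hyY; omega
        have hXne : X.Nonempty := by
          rcases X.eq_empty_or_nonempty with rfl | h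
          · exfalso; simp at hedge
          · exact h
        have hYne : Y.Nonempty := by
          rcases Y.eq_empty_or_nonempty with rfl | h
          · exfalso
            obtain ⟨x, hxX⟩ := hXne
            have := hedge
            have hzero : ∀ x ∈ X, ((∅ : Finset V).filter (G.Adj x ·)).card = 0 := by simp
            rw [Finset.sum_congr rfl hzero] at this
            simp at this
          · exact h
        exact ⟨X, Y, Finset.Subset.refl _, Finset.Subset.refl _, hXne, hYne, hXdeg, hYdeg⟩

open scoped Classical in
theorem hallOrient {V : Type*} (G : SimpleGraph V) [DecidableRel G.Adj] (s : ℕ)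
    (X Y : Finset V) (hdisj : Disjoint X Y)
    (hX : ∀ x ∈ X, 2*s ≤ (Y.filter (G.Adj x ·)).card)
    (hY : ∀ y ∈ Y, 2*s ≤ (X.filter (G.Adj y ·)).card) :
    ∃ AH : V → V → Prop,
      (∀ u v, AH u v → ((u ∈ X ∧ v ∈ Y) ∨ (u ∈ Y ∧ v ∈ X)) ∧ G.Adj u v) ∧
      (∀ u v, u ∈ X → v ∈ Y → G.Adj u v → AH u v ∨ AH v u) ∧
      (∀ u v, AH u v → ¬ AH v u) ∧
      (∀ x ∈ X, s ≤ (Y.filter (fun w => AH w x)).card) ∧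
      (∀ y ∈ Y, s ≤ (X.filter (fun w => AH w y)).card) := by
  set ev : V → Finset (V × V) := fun v =>
    if v ∈ X then (Y.filter (G.Adj v ·)).image (fun w => (v, w))
    else (X.filter (G.Adj v ·)).image (fun u => (u, v)) with hev
  set B := X ∪ Y with hB
  set t : ↥B × Fin s → Finset (V × V) := fun p => ev (p.1 : V) with ht
  have hcond : ∀ T : Finset (↥B × Fin s), T.card ≤ (T.biUnion t).card := by
    intro T
    set W : Finset V := T.image (fun p => (p.1 : V)) with hW
    have hWB : ∀ v ∈ W, v ∈ B := by
      intro v hv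
      rw [hW] at hv
      obtain ⟨p, _, rfl⟩ := mem_image.mp hv
      exact p.1.2
    have hTW : T.card ≤ W.card * s := by
      have hinj : Set.InjOn (fun p : ↥B × Fin s => ((p.1 : V), p.2)) T := by
        intro p _ q _ h
        rw [Prod.ext_iff] at h
        exact Prod.ext (Subtype.ext h.1) h.2
      calc T.card ≤ (W ×ˢ (Finset.univ : Finset (Fin s))).card := by
            apply Finset.card_le_card_of_injOn _ _ hinj
            intro p hp
            exact Finset.mem_product.mpr ⟨mem_image_of_mem _ hp, mem_univ _⟩
        _ = W.card * s := by rw [Finset.card_product, Finset.card_univ, Fintype.card_fin]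
    have hevE : ∀ v ∈ W, ev v ⊆ T.biUnion t := by
      intro v hv
      rw [hW] at hv
      obtain ⟨p, hp, hpv⟩ := mem_image.mp hv
      intro e he
      refine mem_biUnion.mpr ⟨p, hp, ?_⟩
      rw [ht]
      simpa [hpv] using he
    have hcard_ev : ∀ v ∈ W, 2*s ≤ (ev v).card := by
      intro v hv
      rcases mem_union.mp (hWB v hv) with hvX | hvY
      · rw [hev]
        simp only [if_pos hvX]
        rw [Finset.card_image_of_injective _ (fun a b h => (Prod.ext_iff.mp h).2)]
        exact hX v hvX
      · have hvnX : v ∉ X := fun h => (Finset.disjoint_left.mp hdisj h hvY)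
        rw [hev]
        simp only [if_neg hvnX]
        rw [Finset.card_image_of_injective _ (fun a b h => (Prod.ext_iff.mp h).1)]
        exact hY v hvY
    have hdouble : ∑ v ∈ W, (ev v).card ≤ 2 * (T.biUnion t).card := by
      have h1 : ∀ v ∈ W, (ev v).card = ∑ e ∈ T.biUnion t, (if e ∈ ev v then 1 else 0) := by
        intro v hv
        have heq : (T.biUnion t).filter (fun e => e ∈ ev v) = ev v := by
          apply Finset.Subset.antisymm
          · intro e he; exact (mem_filter.mp he).2
          · intro e he; exact mem_filter.mpr ⟨hevE v hv he, he⟩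
        calc (ev v).card = ((T.biUnion t).filter (fun e => e ∈ ev v)).card := by rw [heq]
          _ = ∑ e ∈ T.biUnion t, (if e ∈ ev v then 1 else 0) := Finset.card_filter _ _
      rw [Finset.sum_congr rfl h1, Finset.sum_comm]
      have h2 : ∀ e ∈ T.biUnion t, (∑ v ∈ W, if e ∈ ev v then 1 else 0) ≤ 2 := by
        intro e _
        have hsub : (W.filter (fun v => e ∈ ev v)) ⊆ insert e.1 {e.2} := by
          intro v hv
          obtain ⟨hvW, hvin⟩ := mem_filter.mp hv
          rw [hev] at hvin
          by_cases hvX : v ∈ X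
          · simp only [if_pos hvX] at hvin
            obtain ⟨w, _, hw⟩ := mem_image.mp hvin
            have : e.1 = v := by rw [← hw]
            simp [← this]
          · simp only [if_neg hvX] at hvin
            obtain ⟨u, _, hu⟩ := mem_image.mp hvin
            have : e.2 = v := by rw [← hu]
            simp [← this]
        calc (∑ v ∈ W, if e ∈ ev v then 1 else 0)
            = (W.filter (fun v => e ∈ ev v)).card := (Finset.card_filter _ _).symm
          _ ≤ (insert e.1 ({e.2} : Finset V)).card := card_le_card hsub
          _ ≤ 2 := by
              refine le_trans (card_insert_le _ _) ?_
              simp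
      calc ∑ e ∈ T.biUnion t, (∑ v ∈ W, if e ∈ ev v then 1 else 0)
          ≤ ∑ _e ∈ T.biUnion t, 2 := sum_le_sum h2
        _ = 2 * (T.biUnion t).card := by rw [Finset.sum_const, smul_eq_mul, Nat.mul_comm]
    have h2sW : 2 * (s * W.card) ≤ ∑ v ∈ W, (ev v).card := by
      calc 2 * (s * W.card) = ∑ _v ∈ W, 2*s := by
            rw [Finset.sum_const, smul_eq_mul]; ring
        _ ≤ _ := sum_le_sum hcard_ev
    have hfin : s * W.card ≤ (T.biUnion t).card := by linarith
    calc T.card ≤ W.card * s := hTW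
      _ = s * W.card := Nat.mul_comm _ _
      _ ≤ _ := hfin
  obtain ⟨f, hfinj, hfmem⟩ := (Finset.all_card_le_biUnion_card_iff_exists_injective t).mp hcond
  set AH : V → V → Prop := fun u v =>
    (u ∈ X ∧ v ∈ Y ∧ G.Adj u v ∧ ¬ ∃ p : ↥B × Fin s, f p = (u, v) ∧ (p.1 : V) = u) ∨
    (u ∈ Y ∧ v ∈ X ∧ G.Adj u v ∧ ∃ p : ↥B × Fin s, f p = (v, u) ∧ (p.1 : V) = v) with hAHdef
  have hAHiff : ∀ u v, AH u v ↔
    ((u ∈ X ∧ v ∈ Y ∧ G.Adj u v ∧ ¬ ∃ p : ↥B × Fin s, f p = (u, v) ∧ (p.1 : V) = u) ∨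
    (u ∈ Y ∧ v ∈ X ∧ G.Adj u v ∧ ∃ p : ↥B × Fin s, f p = (v, u) ∧ (p.1 : V) = v)) := by
    intro u v; rw [hAHdef]
  refine ⟨AH, ?_, ?_, ?_, ?_, ?_⟩
  · intro u v h
    rcases (hAHiff u v).mp h with ⟨h1, h2, h3, _⟩ | ⟨h1, h2, h3, _⟩
    · exact ⟨Or.inl ⟨h1, h2⟩, h3⟩
    · exact ⟨Or.inr ⟨h1, h2⟩, h3⟩
  · intro u v huX hvY hadj
    by_cases hch : ∃ p : ↥B × Fin s, f p = (u, v) ∧ (p.1 : V) = u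
    · exact Or.inr ((hAHiff v u).mpr (Or.inr ⟨hvY, huX, hadj.symm, hch⟩))
    · exact Or.inl ((hAHiff u v).mpr (Or.inl ⟨huX, hvY, hadj, hch⟩))
  · intro u v h h'
    rcases (hAHiff u v).mp h with ⟨h1, h2, _, h4⟩ | ⟨h1, h2, _, h4⟩ <;>
      rcases (hAHiff v u).mp h' with ⟨g1, g2, _, g4⟩ | ⟨g1, g2, _, g4⟩
    · exact Finset.disjoint_left.mp hdisj h1 g2
    · exact h4 g4
    · exact g4 h4
    · exact Finset.disjoint_left.mp hdisj h2 g1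
  · intro x hxX
    have hxB : x ∈ B := mem_union_left _ hxX
    set g : Fin s → V := fun k => (f (⟨x, hxB⟩, k)).2 with hg
    have hgood : ∀ k : Fin s, f (⟨x, hxB⟩, k) = (x, g k) ∧ g k ∈ Y ∧ G.Adj x (g k) := by
      intro k
      have hm := hfmem (⟨x, hxB⟩, k)
      rw [ht] at hm
      simp only at hm
      rw [hev] at hm
      simp only [if_pos hxX] at hm
      obtain ⟨w, hw, hwe⟩ := mem_image.mp hm
      obtain ⟨hwY, hwadj⟩ := mem_filter.mp hw
      have h1 : f (⟨x, hxB⟩, k) = (x, w) := hwe.symm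
      have h2 : g k = w := by rw [hg]; simp [h1]
      rw [h2]
      exact ⟨h1, hwY, hwadj⟩
    have hmaps : ∀ k ∈ (Finset.univ : Finset (Fin s)), g k ∈ Y.filter (fun w => AH w x) := by
      intro k _
      obtain ⟨h1, h2, h3⟩ := hgood k
      exact mem_filter.mpr ⟨h2, (hAHiff _ _).mpr (Or.inr ⟨h2, hxX, h3.symm, ⟨(⟨x, hxB⟩, k), h1, rfl⟩⟩)⟩
    have hginj : Set.InjOn g (Finset.univ : Finset (Fin s)) := by
      intro k _ k' _ hkk
      have h1 := (hgood k).1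
      have h2 := (hgood k').1
      have : f (⟨x, hxB⟩, k) = f (⟨x, hxB⟩, k') := by rw [h1, h2, hkk]
      have := hfinj this
      exact (Prod.ext_iff.mp this).2
    have hh := Finset.card_le_card_of_injOn g hmaps hginj
    rw [Finset.card_univ, Fintype.card_fin] at hh
    convert hh using 3
  · intro y hyY
    have hyB : y ∈ B := mem_union_right _ hyY
    have hynX : y ∉ X := fun h => Finset.disjoint_left.mp hdisj h hyY
    set g : Fin s → V := fun k => (f (⟨y, hyB⟩, k)).1 with hg
    have hgood : ∀ k : Fin s, f (⟨y, hyB⟩, k) = (g k, y) ∧ g k ∈ X ∧ G.Adj y (g k) := by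
      intro k
      have hm := hfmem (⟨y, hyB⟩, k)
      rw [ht] at hm
      simp only at hm
      rw [hev] at hm
      simp only [if_neg hynX] at hm
      obtain ⟨w, hw, hwe⟩ := mem_image.mp hm
      obtain ⟨hwX, hwadj⟩ := mem_filter.mp hw
      have h1 : f (⟨y, hyB⟩, k) = (w, y) := hwe.symm
      have h2 : g k = w := by rw [hg]; simp [h1]
      rw [h2]
      exact ⟨h1, hwX, hwadj⟩
    have hmaps : ∀ k ∈ (Finset.univ : Finset (Fin s)), g k ∈ X.filter (fun w => AH w y) := by
      intro k _
      obtain ⟨h1, h2, h3⟩ := hgood k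
      refine mem_filter.mpr ⟨h2, (hAHiff _ _).mpr (Or.inl ⟨h2, hyY, h3.symm, ?_⟩)⟩
      rintro ⟨p, hp1, hp2⟩
      have : f p = f (⟨y, hyB⟩, k) := by rw [hp1, h1]
      have hpe := hfinj this
      have : (p.1 : V) = y := by rw [hpe]
      rw [this] at hp2
      exact hynX (hp2 ▸ h2)
    have hginj : Set.InjOn g (Finset.univ : Finset (Fin s)) := by
      intro k _ k' _ hkk
      have h1 := (hgood k).1
      have h2 := (hgood k').1
      have : f (⟨y, hyB⟩, k) = f (⟨y, hyB⟩, k') := by rw [h1, h2, hkk]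
      have := hfinj this
      exact (Prod.ext_iff.mp this).2
    have hh := Finset.card_le_card_of_injOn g hmaps hginj
    rw [Finset.card_univ, Fintype.card_fin] at hh
    convert hh using 3

theorem build {V : Type*} [Fintype V] {r : ℕ} (G : SimpleGraph V) [DecidableRel G.Adj]
    (C : G.Coloring (Fin r)) (d t : ℕ)
    (hdeg : ∀ v, G.degree v ≤ d) (htd : t ≤ d)
    (hlt : ∀ s : ℕ, t = s + 1 → s * (4*r+1) + 1 ≤ d) :
    ∀ (n : ℕ) (R : Finset V), R.card ≤ n →
      ∃ (A : V → V → Prop) (L : V → ℕ) (sg : V → Bool),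
        (∀ u v, A u v → u ∈ R ∧ v ∈ R ∧ G.Adj u v) ∧
        (∀ u v, u ∈ R → v ∈ R → G.Adj u v → A u v ∨ A v u) ∧
        (∀ u v, A u v → L u < L v ∨ (L u = L v ∧ sg u ≠ sg v)) ∧
        (∀ v, ∀ F : Finset V, F ⊆ R → (∀ w ∈ F, A v w) → F.card ≤ d + 1 - t) := by
  classical
  have hdegR : ∀ (R : Finset V) (v : V), (R.filter (fun w => G.Adj v w)).card ≤ d := by
    intro R v
    refine le_trans (Finset.card_le_card ?_) (le_trans (le_of_eq (G.card_neighborFinset_eq_degree v)) (hdeg v))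
    intro w hw
    rw [Finset.mem_filter] at hw
    exact (SimpleGraph.mem_neighborFinset G v w).mpr hw.2
  intro n
  induction n with
  | zero =>
    intro R hR
    have : R = ∅ := Finset.card_eq_zero.mp (Nat.le_zero.mp hR)
    subst this
    exact ⟨fun _ _ => False, fun _ => 0, fun _ => false,
      fun u v h => h.elim,
      fun u v hu => absurd hu (Finset.notMem_empty u),
      fun u v h => h.elim,
      fun v F hF _ => by rw [Finset.subset_empty.mp hF]; simp⟩
  | succ n ih =>
    intro R hR
    rcases R.eq_empty_or_nonempty with rfl | hRne
    · exact ⟨fun _ _ => False, fun _ => 0, fun _ => false,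
        fun u v h => h.elim,
        fun u v hu => absurd hu (Finset.notMem_empty u),
        fun u v h => h.elim,
        fun v F hF _ => by rw [Finset.subset_empty.mp hF]; simp⟩
    by_cases hcase : ∃ v₀ ∈ R, (R.filter (fun w => G.Adj v₀ w)).card ≤ d + 1 - t
    · -- Case 1 : peel a low-degree vertex
      obtain ⟨v₀, hv₀R, hdv₀⟩ := hcase
      have hcard : (R.erase v₀).card ≤ n := by
        rw [Finset.card_erase_of_mem hv₀R]
        have := Finset.card_pos.mpr ⟨v₀, hv₀R⟩
        omega
      obtain ⟨A', L', sg', h1', h2', h3', h4'⟩ := ih (R.erase v₀) hcard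
      refine ⟨fun u v => A' u v ∨ (u = v₀ ∧ v ∈ R ∧ G.Adj u v),
        fun v => if v = v₀ then 0 else L' v + 1, sg', ?_, ?_, ?_, ?_⟩
      · intro u v h
        rcases h with h | ⟨h1, h2, h3⟩
        · obtain ⟨hu, hv, ha⟩ := h1' u v h
          exact ⟨Finset.erase_subset _ _ hu, Finset.erase_subset _ _ hv, ha⟩
        · exact ⟨h1 ▸ hv₀R, h2, h3⟩
      · intro u v hu hv hadj
        by_cases hu0 : u = v₀
        · exact Or.inl (Or.inr ⟨hu0, hv, hadj⟩)
        · by_cases hv0 : v = v₀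
          · exact Or.inr (Or.inr ⟨hv0, hu, hadj.symm⟩)
          · rcases h2' u v (Finset.mem_erase.mpr ⟨hu0, hu⟩) (Finset.mem_erase.mpr ⟨hv0, hv⟩) hadj with h | h
            · exact Or.inl (Or.inl h)
            · exact Or.inr (Or.inl h)
      · intro u v h
        rcases h with h | ⟨h1, _, h3⟩
        · have hu := (h1' u v h).1
          have hv := (h1' u v h).2.1
          have hu0 : u ≠ v₀ := (Finset.mem_erase.mp hu).1
          have hv0 : v ≠ v₀ := (Finset.mem_erase.mp hv).1
          simp only [if_neg hu0, if_neg hv0]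
          rcases h3' u v h with h' | ⟨h', h''⟩
          · exact Or.inl (by omega)
          · exact Or.inr ⟨by omega, h''⟩
        · have hv0 : v ≠ v₀ := by
            intro hv
            exact (h1 ▸ hv ▸ h3).ne rfl
          simp only [if_pos h1, if_neg hv0]
          exact Or.inl (by omega)
      · intro v F hFR hFA
        by_cases hv0 : v = v₀
        · subst hv0
          have hsub : F ⊆ R.filter (fun w => G.Adj v w) := by
            intro w hw
            rcases hFA w hw with h | ⟨_, h2, h3⟩
            · exact absurd ((Finset.mem_erase.mp (h1' v w h).1).1) (by simp)
            · exact Finset.mem_filter.mpr ⟨h2, h3⟩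
          exact le_trans (Finset.card_le_card hsub) hdv₀
        · have hsub : F ⊆ R.erase v₀ := by
            intro w hw
            rcases hFA w hw with h | ⟨h1, _, _⟩
            · exact (h1' v w h).2.1
            · exact absurd h1 hv0
          refine h4' v F hsub ?_
          intro w hw
          rcases hFA w hw with h | ⟨h1, _, _⟩
          · exact h
          · exact absurd h1 hv0
    · -- Case 2 : all remaining degrees are large; find a bipartite core
      push_neg at hcase
      obtain ⟨v₁, hv₁⟩ := hRne
      have ht2 : 2 ≤ t := by
        have h1 := hcase v₁ hv₁
        have h2 := hdegR R v₁
        omega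
      obtain ⟨s, hs⟩ : ∃ s, t = s + 1 := ⟨t - 1, by omega⟩
      have hs1 : 1 ≤ s := by omega
      have hd1 := hlt s hs
      have hbigdeg : ∀ v ∈ R, 4*r*s + 2 ≤ (R.filter (fun w => G.Adj v w)).card := by
        intro v hv
        have h1 := hcase v hv
        have h1' : d + 2 ≤ (R.filter (fun w => G.Adj v w)).card + t := by omega
        have e1 : s * (4*r+1) = 4*r*s + s := by ring
        have := hdegR R v
        linarith
      set Rc : Fin r → Finset V := fun i => R.filter (fun v => C v = i) with hRc
      have hRcmem : ∀ i w, w ∈ Rc i ↔ w ∈ R ∧ C w = i := by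
        intro i w; rw [hRc]; exact Finset.mem_filter
      have hfib : ∑ i : Fin r, (Rc i).card = R.card := by
        rw [hRc]
        exact (Finset.card_eq_sum_card_fiberwise (fun v _ => Finset.mem_univ (C v))).symm
      have hdiag : ∀ i, ∑ u ∈ Rc i, ((Rc i).filter (fun w => G.Adj u w)).card = 0 := by
        intro i
        apply Finset.sum_eq_zero
        intro u hu
        rw [Finset.card_eq_zero, Finset.eq_empty_iff_forall_notMem]
        intro w hw
        rw [Finset.mem_filter] at hw
        have h1 := (hRcmem i u).mp hu
        have h2 := (hRcmem i w).mp hw.1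
        exact C.valid hw.2 (by rw [h1.2, h2.2])
      have hinner : ∀ u ∈ R, ∑ j : Fin r, ((Rc j).filter (fun w => G.Adj u w)).card
          = (R.filter (fun w => G.Adj u w)).card := by
        intro u _
        have hdisjf : ∀ i ∈ (Finset.univ : Finset (Fin r)), ∀ j ∈ (Finset.univ : Finset (Fin r)),
            i ≠ j → Disjoint ((Rc i).filter (fun w => G.Adj u w)) ((Rc j).filter (fun w => G.Adj u w)) := by
          intro i _ j _ hij
          rw [Finset.disjoint_left]
          intro a ha hb
          rw [Finset.mem_filter] at ha hb
          exact hij (((hRcmem i a).mp ha.1).2 ▸ ((hRcmem j a).mp hb.1).2 ▸ rfl)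
        have hbi : (Finset.univ.biUnion (fun j => (Rc j).filter (fun w => G.Adj u w)))
            = R.filter (fun w => G.Adj u w) := by
          ext w
          simp only [Finset.mem_biUnion, Finset.mem_univ, true_and, Finset.mem_filter, hRc]
          constructor
          · rintro ⟨j, ⟨hwR, _⟩, hadj⟩
            exact ⟨hwR, hadj⟩
          · rintro ⟨hwR, hadj⟩
            exact ⟨C w, ⟨hwR, rfl⟩, hadj⟩
        rw [← hbi, Finset.card_biUnion hdisjf]
      have houter : ∑ i : Fin r, ∑ u ∈ Rc i, (R.filter (fun w => G.Adj u w)).card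
          = ∑ u ∈ R, (R.filter (fun w => G.Adj u w)).card := by
        rw [hRc]
        exact Finset.sum_fiberwise_of_maps_to (fun v _ => Finset.mem_univ (C v)) _
      have hlow : (4*r*s + 2) * R.card ≤ ∑ u ∈ R, (R.filter (fun w => G.Adj u w)).card := by
        calc (4*r*s + 2) * R.card = ∑ _u ∈ R, (4*r*s + 2) := by
              rw [Finset.sum_const, smul_eq_mul, Nat.mul_comm]
          _ ≤ _ := Finset.sum_le_sum (fun u hu => hbigdeg u hu)
      have hpair : ∃ i j : Fin r, i ≠ j ∧
          (2*s - 1) * ((Rc i).card + (Rc j).card) + 1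
            ≤ ∑ u ∈ Rc i, ((Rc j).filter (fun w => G.Adj u w)).card := by
        by_contra hno
        push_neg at hno
        have hup : ∀ i j : Fin r, ∑ u ∈ Rc i, ((Rc j).filter (fun w => G.Adj u w)).card
            ≤ (2*s - 1) * ((Rc i).card + (Rc j).card) := by
          intro i j
          by_cases hij : i = j
          · subst hij; rw [hdiag i]; exact Nat.zero_le _
          · exact Nat.lt_succ_iff.mp (hno i j hij)
        have hsumsplit : ∀ i : Fin r, ∑ j : Fin r, ((Rc i).card + (Rc j).card)
            = r * (Rc i).card + R.card := by
          intro i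
          rw [Finset.sum_add_distrib, Finset.sum_const, Finset.card_univ, Fintype.card_fin,
            hfib, smul_eq_mul]
        have hUB : ∑ i : Fin r, ∑ j : Fin r, (∑ u ∈ Rc i, ((Rc j).filter (fun w => G.Adj u w)).card)
            ≤ (2*s - 1) * (2 * (r * R.card)) := by
          calc ∑ i : Fin r, ∑ j : Fin r, (∑ u ∈ Rc i, ((Rc j).filter (fun w => G.Adj u w)).card)
              ≤ ∑ i : Fin r, ∑ j : Fin r, (2*s - 1) * ((Rc i).card + (Rc j).card) :=
                Finset.sum_le_sum (fun i _ => Finset.sum_le_sum (fun j _ => hup i j))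
            _ = (2*s - 1) * (2 * (r * R.card)) := by
                simp only [← Finset.mul_sum]
                congr 1
                rw [Finset.sum_congr rfl (fun i _ => hsumsplit i), Finset.sum_add_distrib,
                  ← Finset.mul_sum, hfib, Finset.sum_const, Finset.card_univ, Fintype.card_fin,
                  smul_eq_mul]
                ring
        have hLB : ∑ i : Fin r, ∑ j : Fin r, (∑ u ∈ Rc i, ((Rc j).filter (fun w => G.Adj u w)).card)
            = ∑ u ∈ R, (R.filter (fun w => G.Adj u w)).card := by
          calc ∑ i : Fin r, ∑ j : Fin r, (∑ u ∈ Rc i, ((Rc j).filter (fun w => G.Adj u w)).card)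
              = ∑ i : Fin r, ∑ u ∈ Rc i, ∑ j : Fin r, ((Rc j).filter (fun w => G.Adj u w)).card :=
                Finset.sum_congr rfl (fun i _ => Finset.sum_comm)
            _ = ∑ i : Fin r, ∑ u ∈ Rc i, (R.filter (fun w => G.Adj u w)).card := by
                refine Finset.sum_congr rfl (fun i _ => Finset.sum_congr rfl (fun u hu => hinner u ?_))
                exact ((hRcmem i u).mp hu).1
            _ = ∑ u ∈ R, (R.filter (fun w => G.Adj u w)).card := houter
        have hchain : (4*r*s + 2) * R.card ≤ (2*s - 1) * (2 * (r * R.card)) := by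
          rw [← hLB] at hlow
          exact le_trans hlow hUB
        have hcard1 : 1 ≤ R.card := Finset.card_pos.mpr ⟨v₁, hv₁⟩
        obtain ⟨s', rfl⟩ : ∃ s', s = s' + 1 := ⟨s - 1, by omega⟩
        have he : 2*(s'+1) - 1 = 2*s' + 1 := by omega
        rw [he] at hchain
        nlinarith
      obtain ⟨i, j, hij, hPij⟩ := hpair
      obtain ⟨X, Y, hXsub, hYsub, hXne, hYne, hXdeg, hYdeg⟩ :=
        core G (2*s) ((Rc i).card + (Rc j).card) (Rc i) (Rc j) le_rfl hPij
      have hXR : X ⊆ R := fun a ha => ((hRcmem i a).mp (hXsub ha)).1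
      have hYR : Y ⊆ R := fun a ha => ((hRcmem j a).mp (hYsub ha)).1
      have hdisjXY : Disjoint X Y := by
        rw [Finset.disjoint_left]
        intro a ha hb
        exact hij (((hRcmem i a).mp (hXsub ha)).2 ▸ ((hRcmem j a).mp (hYsub hb)).2 ▸ rfl)
      obtain ⟨AH, hAH1, hAH2, hAH3, hAH4, hAH5⟩ := hallOrient G s X Y hdisjXY hXdeg hYdeg
      have hBR : X ∪ Y ⊆ R := Finset.union_subset hXR hYR
      have hR'card : (R \ (X ∪ Y)).card ≤ n := by
        obtain ⟨x₀, hx₀⟩ := hXne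
        have hsub : R \ (X ∪ Y) ⊆ R.erase x₀ := by
          intro w hw
          rw [Finset.mem_sdiff] at hw
          exact Finset.mem_erase.mpr
            ⟨fun h => hw.2 (h ▸ Finset.mem_union_left _ hx₀), hw.1⟩
        have h1 := Finset.card_le_card hsub
        rw [Finset.card_erase_of_mem (hXR hx₀)] at h1
        have := Finset.card_pos.mpr ⟨x₀, hXR hx₀⟩
        omega
      obtain ⟨A', L', sg', h1', h2', h3', h4'⟩ := ih (R \ (X ∪ Y)) hR'card
      refine ⟨fun u v => A' u v ∨ AH u v ∨ (u ∈ X ∪ Y ∧ v ∈ R \ (X ∪ Y) ∧ G.Adj u v),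
        fun v => if v ∈ X ∪ Y then 0 else L' v + 1,
        fun v => if v ∈ Y then true else if v ∈ X then false else sg' v, ?_, ?_, ?_, ?_⟩
      · intro u v h
        rcases h with h | h | ⟨hb1, hb2, hb3⟩
        · obtain ⟨hu, hv, ha⟩ := h1' u v h
          exact ⟨Finset.sdiff_subset hu, Finset.sdiff_subset hv, ha⟩
        · obtain ⟨hmem, ha⟩ := hAH1 u v h
          rcases hmem with ⟨hu, hv⟩ | ⟨hu, hv⟩
          · exact ⟨hXR hu, hYR hv, ha⟩
          · exact ⟨hYR hu, hXR hv, ha⟩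
        · exact ⟨hBR hb1, Finset.sdiff_subset hb2, hb3⟩
      · intro u v hu hv hadj
        by_cases huB : u ∈ X ∪ Y
        · by_cases hvB : v ∈ X ∪ Y
          · rcases Finset.mem_union.mp huB with huX | huY <;>
              rcases Finset.mem_union.mp hvB with hvX | hvY
            · exact absurd (by rw [((hRcmem i u).mp (hXsub huX)).2, ((hRcmem i v).mp (hXsub hvX)).2])
                (C.valid hadj)
            · rcases hAH2 u v huX hvY hadj with h | h
              · exact Or.inl (Or.inr (Or.inl h))
              · exact Or.inr (Or.inr (Or.inl h))
            · rcases hAH2 v u hvX huY hadj.symm with h | h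
              · exact Or.inr (Or.inr (Or.inl h))
              · exact Or.inl (Or.inr (Or.inl h))
            · exact absurd (by rw [((hRcmem j u).mp (hYsub huY)).2, ((hRcmem j v).mp (hYsub hvY)).2])
                (C.valid hadj)
          · exact Or.inl (Or.inr (Or.inr ⟨huB, Finset.mem_sdiff.mpr ⟨hv, hvB⟩, hadj⟩))
        · by_cases hvB : v ∈ X ∪ Y
          · exact Or.inr (Or.inr (Or.inr ⟨hvB, Finset.mem_sdiff.mpr ⟨hu, huB⟩, hadj.symm⟩))
          · rcases h2' u v (Finset.mem_sdiff.mpr ⟨hu, huB⟩) (Finset.mem_sdiff.mpr ⟨hv, hvB⟩) hadj with h | h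
            · exact Or.inl (Or.inl h)
            · exact Or.inr (Or.inl h)
      · intro u v h
        rcases h with h | h | ⟨hb1, hb2, _⟩
        · have hu := (h1' u v h).1
          have hv := (h1' u v h).2.1
          have huB : u ∉ X ∪ Y := (Finset.mem_sdiff.mp hu).2
          have hvB : v ∉ X ∪ Y := (Finset.mem_sdiff.mp hv).2
          have huY : u ∉ Y := fun hh => huB (Finset.mem_union_right _ hh)
          have huX : u ∉ X := fun hh => huB (Finset.mem_union_left _ hh)
          have hvY : v ∉ Y := fun hh => hvB (Finset.mem_union_right _ hh)
          have hvX : v ∉ X := fun hh => hvB (Finset.mem_union_left _ hh)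
          simp only [if_neg huB, if_neg hvB, if_neg huY, if_neg huX, if_neg hvY, if_neg hvX]
          rcases h3' u v h with h' | ⟨h', h''⟩
          · exact Or.inl (by omega)
          · exact Or.inr ⟨by omega, h''⟩
        · obtain ⟨hmem, _⟩ := hAH1 u v h
          rcases hmem with ⟨huX, hvY⟩ | ⟨huY, hvX⟩
          · have huB : u ∈ X ∪ Y := Finset.mem_union_left _ huX
            have hvB : v ∈ X ∪ Y := Finset.mem_union_right _ hvY
            have huY : u ∉ Y := fun hh => Finset.disjoint_left.mp hdisjXY huX hh
            refine Or.inr ⟨by simp only [if_pos huB, if_pos hvB], ?_⟩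
            simp only [if_neg huY, if_pos huX, if_pos hvY]
            simp
          · have huB : u ∈ X ∪ Y := Finset.mem_union_right _ huY
            have hvB : v ∈ X ∪ Y := Finset.mem_union_left _ hvX
            have hvY : v ∉ Y := fun hh => Finset.disjoint_left.mp hdisjXY hvX hh
            refine Or.inr ⟨by simp only [if_pos huB, if_pos hvB], ?_⟩
            simp only [if_pos huY, if_neg hvY, if_pos hvX]
            simp
        · have hvB : v ∉ X ∪ Y := (Finset.mem_sdiff.mp hb2).2
          simp only [if_pos hb1, if_neg hvB]
          exact Or.inl (by omega)
      · intro v F hFR hFA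
        by_cases hvR : v ∈ R
        · by_cases hvB : v ∈ X ∪ Y
          · have hvR' : v ∉ R \ (X ∪ Y) := fun hh => (Finset.mem_sdiff.mp hh).2 hvB
            rcases Finset.mem_union.mp hvB with hvX | hvY
            · -- v ∈ X
              have hvnY : v ∉ Y := fun hh => Finset.disjoint_left.mp hdisjXY hvX hh
              have hsubF : F ⊆ (Y.filter (fun w => AH v w)) ∪ ((R \ (X ∪ Y)).filter (fun w => G.Adj v w)) := by
                intro w hw
                rcases hFA w hw with h | h | ⟨_, hb2, hb3⟩
                · exact absurd (h1' v w h).1 hvR'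
                · obtain ⟨hmem, _⟩ := hAH1 v w h
                  rcases hmem with ⟨_, hwY⟩ | ⟨hvY, _⟩
                  · exact Finset.mem_union_left _ (Finset.mem_filter.mpr ⟨hwY, h⟩)
                  · exact absurd hvY hvnY
                · exact Finset.mem_union_right _ (Finset.mem_filter.mpr ⟨hb2, hb3⟩)
              have hcF : F.card ≤ (Y.filter (fun w => AH v w)).card
                  + ((R \ (X ∪ Y)).filter (fun w => G.Adj v w)).card :=
                le_trans (Finset.card_le_card hsubF) (Finset.card_union_le _ _)
              have hdisj_oi : Disjoint (Y.filter (fun w => AH v w)) (Y.filter (fun w => AH w v)) := by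
                rw [Finset.disjoint_left]
                intro a ha hb
                rw [Finset.mem_filter] at ha hb
                exact hAH3 v a ha.2 hb.2
              have hsub_oi : (Y.filter (fun w => AH v w)) ∪ (Y.filter (fun w => AH w v))
                  ⊆ Y.filter (fun w => G.Adj v w) := by
                intro a ha
                rcases Finset.mem_union.mp ha with h | h <;> rw [Finset.mem_filter] at h
                · exact Finset.mem_filter.mpr ⟨h.1, (hAH1 v a h.2).2⟩
                · exact Finset.mem_filter.mpr ⟨h.1, (hAH1 a v h.2).2.symm⟩
              have hoi : (Y.filter (fun w => AH v w)).card + (Y.filter (fun w => AH w v)).card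
                  ≤ (Y.filter (fun w => G.Adj v w)).card := by
                rw [← Finset.card_union_of_disjoint hdisj_oi]
                exact Finset.card_le_card hsub_oi
              have hin : s ≤ (Y.filter (fun w => AH w v)).card := hAH4 v hvX
              have hYdisj : Disjoint (Y.filter (fun w => G.Adj v w))
                  ((R \ (X ∪ Y)).filter (fun w => G.Adj v w)) := by
                rw [Finset.disjoint_left]
                intro a ha hb
                rw [Finset.mem_filter] at ha hb
                exact (Finset.mem_sdiff.mp hb.1).2 (Finset.mem_union_right _ ha.1)
              have hYun : (Y.filter (fun w => G.Adj v w)) ∪ ((R \ (X ∪ Y)).filter (fun w => G.Adj v w))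
                  ⊆ R.filter (fun w => G.Adj v w) := by
                intro a ha
                rcases Finset.mem_union.mp ha with h | h <;> rw [Finset.mem_filter] at h
                · exact Finset.mem_filter.mpr ⟨hYR h.1, h.2⟩
                · exact Finset.mem_filter.mpr ⟨(Finset.mem_sdiff.mp h.1).1, h.2⟩
              have hYtot : (Y.filter (fun w => G.Adj v w)).card
                  + ((R \ (X ∪ Y)).filter (fun w => G.Adj v w)).card
                  ≤ (R.filter (fun w => G.Adj v w)).card := by
                rw [← Finset.card_union_of_disjoint hYdisj]
                exact Finset.card_le_card hYun
              have hdR := hdegR R v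
              omega
            · -- v ∈ Y
              have hvnX : v ∉ X := fun hh => Finset.disjoint_left.mp hdisjXY hh hvY
              have hsubF : F ⊆ (X.filter (fun w => AH v w)) ∪ ((R \ (X ∪ Y)).filter (fun w => G.Adj v w)) := by
                intro w hw
                rcases hFA w hw with h | h | ⟨_, hb2, hb3⟩
                · exact absurd (h1' v w h).1 hvR'
                · obtain ⟨hmem, _⟩ := hAH1 v w h
                  rcases hmem with ⟨hvX, _⟩ | ⟨_, hwX⟩
                  · exact absurd hvX hvnX
                  · exact Finset.mem_union_left _ (Finset.mem_filter.mpr ⟨hwX, h⟩)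
                · exact Finset.mem_union_right _ (Finset.mem_filter.mpr ⟨hb2, hb3⟩)
              have hcF : F.card ≤ (X.filter (fun w => AH v w)).card
                  + ((R \ (X ∪ Y)).filter (fun w => G.Adj v w)).card :=
                le_trans (Finset.card_le_card hsubF) (Finset.card_union_le _ _)
              have hdisj_oi : Disjoint (X.filter (fun w => AH v w)) (X.filter (fun w => AH w v)) := by
                rw [Finset.disjoint_left]
                intro a ha hb
                rw [Finset.mem_filter] at ha hb
                exact hAH3 v a ha.2 hb.2
              have hsub_oi : (X.filter (fun w => AH v w)) ∪ (X.filter (fun w => AH w v))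
                  ⊆ X.filter (fun w => G.Adj v w) := by
                intro a ha
                rcases Finset.mem_union.mp ha with h | h <;> rw [Finset.mem_filter] at h
                · exact Finset.mem_filter.mpr ⟨h.1, (hAH1 v a h.2).2⟩
                · exact Finset.mem_filter.mpr ⟨h.1, (hAH1 a v h.2).2.symm⟩
              have hoi : (X.filter (fun w => AH v w)).card + (X.filter (fun w => AH w v)).card
                  ≤ (X.filter (fun w => G.Adj v w)).card := by
                rw [← Finset.card_union_of_disjoint hdisj_oi]
                exact Finset.card_le_card hsub_oi
              have hin : s ≤ (X.filter (fun w => AH w v)).card := hAH5 v hvY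
              have hYdisj : Disjoint (X.filter (fun w => G.Adj v w))
                  ((R \ (X ∪ Y)).filter (fun w => G.Adj v w)) := by
                rw [Finset.disjoint_left]
                intro a ha hb
                rw [Finset.mem_filter] at ha hb
                exact (Finset.mem_sdiff.mp hb.1).2 (Finset.mem_union_left _ ha.1)
              have hYun : (X.filter (fun w => G.Adj v w)) ∪ ((R \ (X ∪ Y)).filter (fun w => G.Adj v w))
                  ⊆ R.filter (fun w => G.Adj v w) := by
                intro a ha
                rcases Finset.mem_union.mp ha with h | h <;> rw [Finset.mem_filter] at h
                · exact Finset.mem_filter.mpr ⟨hXR h.1, h.2⟩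
                · exact Finset.mem_filter.mpr ⟨(Finset.mem_sdiff.mp h.1).1, h.2⟩
              have hYtot : (X.filter (fun w => G.Adj v w)).card
                  + ((R \ (X ∪ Y)).filter (fun w => G.Adj v w)).card
                  ≤ (R.filter (fun w => G.Adj v w)).card := by
                rw [← Finset.card_union_of_disjoint hYdisj]
                exact Finset.card_le_card hYun
              have hdR := hdegR R v
              omega
          · -- v ∈ R' : defer to recursive structure
            have hsubF : F ⊆ R \ (X ∪ Y) := by
              intro w hw
              rcases hFA w hw with h | h | ⟨hb1, _, _⟩
              · exact (h1' v w h).2.1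
              · obtain ⟨hmem, _⟩ := hAH1 v w h
                rcases hmem with ⟨hvX, _⟩ | ⟨hvY, _⟩
                · exact absurd (Finset.mem_union_left _ hvX) hvB
                · exact absurd (Finset.mem_union_right _ hvY) hvB
              · exact absurd hb1 hvB
            refine h4' v F hsubF ?_
            intro w hw
            rcases hFA w hw with h | h | ⟨hb1, _, _⟩
            · exact h
            · obtain ⟨hmem, _⟩ := hAH1 v w h
              rcases hmem with ⟨hvX, _⟩ | ⟨hvY, _⟩
              · exact absurd (Finset.mem_union_left _ hvX) hvB
              · exact absurd (Finset.mem_union_right _ hvY) hvB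
            · exact absurd hb1 hvB
        · have hF : F = ∅ := by
            rw [Finset.eq_empty_iff_forall_notMem]
            intro w hw
            rcases hFA w hw with h | h | ⟨hb1, _, _⟩
            · exact hvR (Finset.sdiff_subset (h1' v w h).1)
            · obtain ⟨hmem, _⟩ := hAH1 v w h
              rcases hmem with ⟨hvX, _⟩ | ⟨hvY, _⟩
              · exact hvR (hXR hvX)
              · exact hvR (hYR hvY)
            · exact hvR (hBR hb1)
          rw [hF]
          simp

end St18

/-- For integers `d ≥ 0` and `r ≥ 2`, every graph of maximum degree at
most `d` and chromatic number at most `r` has paintability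
`χ_P(G) ≤ (1 - 1/(4r+1))·d + 2`. -/
theorem statement18 (r d : ℕ) (hr : 2 ≤ r) {V : Type*} [Fintype V] (G : SimpleGraph V)
    [DecidableRel G.Adj] (hcol : G.Colorable r) (hdeg : ∀ v, G.degree v ≤ d) :
    (chiP G : ℝ) ≤ (1 - 1 / (4 * r + 1)) * d + 2 := by
  classical
  obtain ⟨C⟩ := hcol
  set t := (d + 4*r) / (4*r + 1) with htdef
  have h41 : 0 < 4*r + 1 := by omega
  have hmul : d ≤ t * (4*r+1) := by
    have h1 := Nat.div_add_mod (d + 4*r) (4*r+1)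
    have h2 : (d + 4*r) % (4*r+1) < 4*r+1 := Nat.mod_lt _ h41
    rw [← htdef] at h1
    have h3 : t * (4*r+1) = (4*r+1) * t := Nat.mul_comm _ _
    linarith
  have htd : t ≤ d := by
    by_contra hcon
    push_neg at hcon
    have h1 : t * (4*r+1) ≤ d + 4*r := by
      have := Nat.div_mul_le_self (d + 4*r) (4*r+1)
      rwa [← htdef] at this
    nlinarith
  have hlt : ∀ s : ℕ, t = s + 1 → s * (4*r+1) + 1 ≤ d := by
    intro s hs
    have h1 : t * (4*r+1) ≤ d + 4*r := by
      have := Nat.div_mul_le_self (d + 4*r) (4*r+1)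
      rwa [← htdef] at this
    rw [hs] at h1
    nlinarith
  obtain ⟨A, L, sg, h1, h2, h3, h4⟩ :=
    St18.build G C d t hdeg htd hlt (Finset.univ.card) Finset.univ le_rfl
  set k := d + 2 - t with hkdef
  have hpaint : PaintN G (∑ _v ∈ (Finset.univ : Finset V), k) (Finset.univ : Finset V) (fun _ => k) := by
    apply St18.paintN_of_orientation G A L sg
    · intro u v hadj
      exact h2 u v (Finset.mem_univ u) (Finset.mem_univ v) hadj
    · exact h3
    · intro v _ F hFsub hFA
      have := h4 v F hFsub hFA
      omega
    · exact le_rfl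
  have hk : chiP G ≤ k := Nat.sInf_le ⟨_, hpaint⟩
  have hkr : (chiP G : ℝ) ≤ (k : ℝ) := by exact_mod_cast hk
  refine le_trans hkr ?_
  have hkval : (k : ℝ) = (d : ℝ) + 2 - (t : ℝ) := by
    rw [hkdef]
    push_cast [Nat.cast_sub (show t ≤ d + 2 by omega)]
    ring
  rw [hkval]
  have hQ : (0:ℝ) < 4 * (r:ℝ) + 1 := by positivity
  have hmulR : (d:ℝ) ≤ (t:ℝ) * (4*(r:ℝ)+1) := by exact_mod_cast hmul
  have hdiv : (d:ℝ) / (4*(r:ℝ)+1) ≤ (t:ℝ) := by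
    rw [div_le_iff₀ hQ]
    linarith
  have hexp : (1 - 1/(4*(r:ℝ)+1)) * (d:ℝ) = (d:ℝ) - (d:ℝ)/(4*(r:ℝ)+1) := by
    field_simp
  linarith
end
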